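/- arXiv:1810.03741 — 9 statements merged into one kernel-verified Lean document; each statement's English description precedes it below -/
import Mathlib

section
/- Let {U_1, ..., U_{d+1}} be a sunflower of convex open sets in R^d with center U. Then any hyperplane which intersects every U_i must also intersect U. -/
open Set Module

variable {E : Type*} [NormedAddCommGroup E] [NormedSpace ℝ E]

lemma open_cone_add_closure {s : Set E}
    (hso : IsOpen s) (hsc : Convex ℝ s)
    (hcone : ∀ c : ℝ, 0 < c → ∀ v ∈ s, c • v ∈ s)
    {u w : E} (hu : u ∈ s) (hw : w ∈ closure s) : u + w ∈ s := by
  have hmid : (1/2 : ℝ) • u + (1/2 : ℝ) • w ∈ s := by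
    have h := hsc.openSegment_interior_closure_subset_interior
      (by rw [hso.interior_eq]; exact hu) hw
    have hm : (1/2 : ℝ) • u + (1/2 : ℝ) • w ∈ openSegment ℝ u w :=
      ⟨1/2, 1/2, by norm_num, by norm_num, by norm_num, rfl⟩
    have := h hm
    rwa [hso.interior_eq] at this
  have := hcone 2 (by norm_num) _ hmid
  rwa [smul_add, smul_smul, smul_smul, (by norm_num : (2:ℝ) * (1/2) = 1), one_smul,
    one_smul] at this

lemma smul_mem_closure_cone {s : Set E}
    (hcone : ∀ c : ℝ, 0 < c → ∀ v ∈ s, c • v ∈ s)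
    {c : ℝ} (hc : 0 < c) {w : E} (hw : w ∈ closure s) : c • w ∈ closure s := by
  have hmap : Continuous fun x : E => c • x := continuous_const.smul continuous_id
  have := image_closure_subset_closure_image (s := s) hmap ⟨w, hw, rfl⟩
  refine closure_mono ?_ this
  rintro x ⟨v, hv, rfl⟩
  exact hcone c hc v hv

/-- Key cone lemma: if `K, Ks i` are open convex cones with all pairwise intersections
of the `Ks` contained in `K`, all containing `K`, `0 ∉ K`, and `0` lies in the convex
hulls of the unions over two disjoint index sets, we get a contradiction. -/
lemma cone_sunflower_lemma (D : ℕ) :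
    ∀ (E : Type) (_ : NormedAddCommGroup E), ∀ (_ : InnerProductSpace ℝ E),
    ∀ (_ : FiniteDimensional ℝ E) {ι : Type} (K : Set E) (Ks : ι → Set E) (I J : Set ι),
      finrank ℝ E ≤ D →
      IsOpen K → Convex ℝ K → K.Nonempty → (0:E) ∉ K →
      (∀ c : ℝ, 0 < c → ∀ v ∈ K, c • v ∈ K) →
      (∀ i, IsOpen (Ks i)) → (∀ i, Convex ℝ (Ks i)) →
      (∀ i, ∀ c : ℝ, 0 < c → ∀ v ∈ Ks i, c • v ∈ Ks i) →
      (∀ i, K ⊆ Ks i) →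
      (∀ i j, i ≠ j → Ks i ∩ Ks j ⊆ K) →
      Disjoint I J →
      (0:E) ∈ convexHull ℝ (⋃ i ∈ I, Ks i) →
      (0:E) ∈ convexHull ℝ (⋃ j ∈ J, Ks j) → False := by
  induction D with
  | zero =>
    intro E _ _ _ ι K Ks I J hD hKo hKc hKne hK0 hKcone hso hsc hscone hsub hpair hIJ hI hJ
    obtain ⟨k, hk⟩ := hKne
    have h0 : finrank ℝ E = 0 := Nat.le_zero.mp hD
    have : Subsingleton E := finrank_zero_iff.mp h0
    exact hK0 ((Subsingleton.elim k 0) ▸ hk)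
  | succ D ih =>
    intro E _ _ _ ι K Ks I J hD hKo hKc hKne hK0 hKcone hso hsc hscone hsub hpair hIJ hI hJ
    obtain ⟨k, hk⟩ := hKne
    have hk0 : k ≠ 0 := fun h => hK0 (h ▸ hk)
    by_cases h0 : ∃ i0, (0:E) ∈ Ks i0
    · -- some petal cone contains the origin
      obtain ⟨i0, hi0⟩ := h0
      have key : ∀ (S : Set ι), i0 ∉ S → (0:E) ∈ convexHull ℝ (⋃ i ∈ S, Ks i) → False := by
        intro S hS h0m
        apply hK0
        refine convexHull_min ?_ hKc h0m
        intro v hv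
        rw [mem_iUnion₂] at hv
        obtain ⟨i, hiS, hvi⟩ := hv
        have hne : i ≠ i0 := fun h => hS (h ▸ hiS)
        have hP : IsOpen {t : ℝ | t • v ∈ Ks i0} :=
          (hso i0).preimage (continuous_id.smul continuous_const)
        have h0P : (0:ℝ) ∈ {t : ℝ | t • v ∈ Ks i0} := by simp [hi0]
        obtain ⟨δ, hδ, hball⟩ := Metric.isOpen_iff.mp hP 0 h0P
        have htpos : 0 < δ/2 := by linarith
        have h1 : (δ/2) • v ∈ Ks i0 := by
          apply hball
          rw [Metric.mem_ball, Real.dist_eq, sub_zero, abs_of_pos htpos]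
          linarith
        have h2 : (δ/2) • v ∈ Ks i := hscone i _ htpos v hvi
        have h3 : (δ/2) • v ∈ K := hpair i i0 hne ⟨h2, h1⟩
        have := hKcone (δ/2)⁻¹ (by positivity) _ h3
        rwa [smul_smul, inv_mul_cancel₀ (ne_of_gt htpos), one_smul] at this
      by_cases hiI : i0 ∈ I
      · exact key J (fun hiJ => (hIJ.ne_of_mem hiI hiJ) rfl) hJ
      · exact key I hiI hI
    · push_neg at h0
      by_cases hrank : finrank ℝ E ≤ 1
      · -- one-dimensional case
        have hspan : Submodule.span ℝ {k} = ⊤ := by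
          have h1 : finrank ℝ (Submodule.span ℝ {k}) = 1 := finrank_span_singleton hk0
          apply Submodule.eq_top_of_finrank_eq
          have h2 := Submodule.finrank_le (Submodule.span ℝ {k})
          omega
        have hsubK : (⋃ i ∈ I, Ks i) ⊆ K := by
          intro u hu
          rw [mem_iUnion₂] at hu
          obtain ⟨i, hiI, hui⟩ := hu
          have hu' : u ∈ Submodule.span ℝ {k} := hspan ▸ Submodule.mem_top
          obtain ⟨c, rfl⟩ := Submodule.mem_span_singleton.mp hu'
          rcases lt_trichotomy c 0 with hc | hc | hc
          · exfalso
            apply h0 i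
            have hc1 : (0:ℝ) < 1 - c := by linarith
            have hθ0 : (0:ℝ) < 1/(1-c) := by positivity
            have hθ1 : 1/(1-c) ≤ 1 := by
              rw [div_le_one hc1]; linarith
            have hmem := (hsc i) hui (hsub i hk) (a := 1/(1-c)) (b := 1 - 1/(1-c))
              (le_of_lt hθ0) (by linarith) (by ring)
            have heq : (1/(1-c)) • (c • k) + (1 - 1/(1-c)) • k = (0:E) := by
              rw [smul_smul, ← add_smul]
              convert zero_smul ℝ k using 2
              field_simp
              ring
            rwa [heq] at hmem
          · exfalso; apply h0 i; rwa [hc, zero_smul] at hui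
          · exact hKcone c hc k hk
        exact hK0 (convexHull_min hsubK hKc hI)
      · -- dimension ≥ 2 : project along a nonzero boundary point of K
        push_neg at hrank
        rcases le_or_gt (finrank ℝ E) D with hDle | hDgt
        · exact ih E inferInstance inferInstance inferInstance K Ks I J hDle hKo hKc ⟨k, hk⟩ hK0 hKcone hso hsc hscone hsub
            hpair hIJ hI hJ
        have hEr : finrank ℝ E = D + 1 := by omega
        -- 0 is in the closure of K
        have h0cl : (0:E) ∈ closure K := by
          rw [Metric.mem_closure_iff]
          intro ε hε
          refine ⟨(ε/(‖k‖+1)) • k, hKcone _ (by positivity) k hk, ?_⟩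
          rw [dist_comm, dist_zero_right, norm_smul, Real.norm_eq_abs,
            abs_of_pos (by positivity)]
          rw [div_mul_eq_mul_div, mul_comm, ← div_mul_eq_mul_div]
          have hlt : ‖k‖/(‖k‖+1) < 1 := by
            rw [div_lt_one (by positivity)]; linarith
          calc ‖k‖/(‖k‖+1) * ε < 1 * ε := by
                apply mul_lt_mul_of_pos_right hlt hε
            _ = ε := one_mul ε
        -- closure of K is not everything
        have hclne : closure K ≠ univ := by
          intro hcl
          have hnk : -k ∈ closure K := by rw [hcl]; trivial
          have := open_cone_add_closure hKo hKc hKcone hk hnk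
          rw [add_neg_cancel] at this
          exact hK0 this
        obtain ⟨u0, hu0⟩ : ∃ u, u ∉ closure K := by
          by_contra h; push_neg at h; exact hclne (eq_univ_of_forall h)
        obtain ⟨w, hw⟩ : ∃ w, w ∉ Submodule.span ℝ {k} := by
          by_contra h; push_neg at h
          have hsp : Submodule.span ℝ {k} = ⊤ := eq_top_iff.mpr (fun x _ => h x)
          have h1 : finrank ℝ (Submodule.span ℝ {k}) = 1 := finrank_span_singleton hk0
          rw [hsp, finrank_top] at h1
          omega
        -- find u outside both `closure K` and the span of k
        obtain ⟨u, huc, hus⟩ : ∃ u, u ∉ closure K ∧ u ∉ Submodule.span ℝ {k} := by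
          by_cases hu0s : u0 ∈ Submodule.span ℝ {k}
          · have hop : IsOpen {δ : ℝ | u0 + δ • w ∈ (closure K)ᶜ} :=
              (isClosed_closure.isOpen_compl).preimage
                (continuous_const.add (continuous_id.smul continuous_const))
            have h0m : (0:ℝ) ∈ {δ : ℝ | u0 + δ • w ∈ (closure K)ᶜ} := by simp [hu0]
            obtain ⟨δ, hδ, hball⟩ := Metric.isOpen_iff.mp hop 0 h0m
            refine ⟨u0 + (δ/2) • w, ?_, ?_⟩
            · have hmem2 : (δ/2 : ℝ) ∈ Metric.ball (0:ℝ) δ := by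
                rw [Metric.mem_ball, Real.dist_eq, sub_zero, abs_of_pos (by linarith)]
                linarith
              simpa using hball hmem2
            · intro hmem
              apply hw
              have hsub' : (δ/2) • w ∈ Submodule.span ℝ {k} := by
                have := Submodule.sub_mem _ hmem hu0s
                simpa using this
              have := Submodule.smul_mem _ (δ/2)⁻¹ hsub'
              rwa [smul_smul, inv_mul_cancel₀ (by positivity), one_smul] at this
          · exact ⟨u0, hu0, hu0s⟩
        -- walk from k to u and find the boundary point k₀ ≠ 0
        set seg : ℝ → E := fun t => k + t • (u - k) with hseg
        have hsegc : Continuous seg := continuous_const.add (continuous_id.smul continuous_const)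
        set NS : Set ℝ := {t | t ∈ Icc (0:ℝ) 1 ∧ seg t ∉ K} with hNS
        have hNSc : IsClosed NS := by
          have : NS = Icc (0:ℝ) 1 ∩ seg ⁻¹' Kᶜ := rfl
          rw [this]
          exact isClosed_Icc.inter (hKo.isClosed_compl.preimage hsegc)
        have h1NS : (1:ℝ) ∈ NS := by
          refine ⟨⟨zero_le_one, le_refl 1⟩, ?_⟩
          have : seg 1 = u := by simp [hseg]
          rw [this]
          exact fun h => huc (subset_closure h)
        have hbdd : BddBelow NS := ⟨0, fun x hx => hx.1.1⟩
        set t1 := sInf NS with ht1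
        have ht1NS : t1 ∈ NS := hNSc.csInf_mem ⟨1, h1NS⟩ hbdd
        have ht1pos : 0 < t1 := by
          rcases lt_or_eq_of_le ht1NS.1.1 with h | h
          · exact h
          · exfalso
            apply ht1NS.2
            rw [← h]
            have : seg 0 = k := by simp [hseg]
            rw [this]; exact hk
        set k₀ := seg t1 with hk₀
        have hk₀cl : k₀ ∈ closure K := by
          rw [Metric.mem_closure_iff]
          intro ε hε
          have hca : ContinuousAt seg t1 := hsegc.continuousAt
          rw [Metric.continuousAt_iff] at hca
          obtain ⟨δ, hδ, hδc⟩ := hca ε hε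
          have hmpos : 0 < min δ t1 := lt_min hδ ht1pos
          set t := t1 - min δ t1 / 2 with htdef
          have ht_lt : t < t1 := by
            rw [htdef]; linarith
          have ht0 : 0 ≤ t := by
            have : min δ t1 ≤ t1 := min_le_right _ _
            rw [htdef]; linarith
          have htK : seg t ∈ K := by
            by_contra hns
            have htNS : t ∈ NS := ⟨⟨ht0, by linarith [ht1NS.1.2]⟩, hns⟩
            have := csInf_le hbdd htNS
            rw [← ht1] at this
            linarith
          refine ⟨seg t, htK, ?_⟩
          rw [dist_comm]
          apply hδc
          rw [Real.dist_eq, htdef]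
          have : min δ t1 ≤ δ := min_le_left _ _
          rw [abs_of_nonpos (by linarith)]
          linarith
        have hk₀K : k₀ ∉ K := ht1NS.2
        have hk₀0 : k₀ ≠ 0 := by
          intro h
          apply hus
          have h' : t1⁻¹ • (k + t1 • (u - k)) = t1⁻¹ • (0:E) := by rw [← h]
          rw [smul_zero, smul_add, smul_smul, inv_mul_cancel₀ (ne_of_gt ht1pos), one_smul] at h'
          have hu' : u = (1 - t1⁻¹) • k := by
            have : t1⁻¹ • k + (u - k) = 0 := h'
            have : u = k - t1⁻¹ • k := by
              rw [eq_sub_iff_add_eq]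
              linear_combination (norm := module) this
            rw [this, sub_smul, one_smul]
          rw [hu']
          exact Submodule.smul_mem _ _ (Submodule.mem_span_singleton_self k)
        -- set up the orthogonal projection
        set L : Submodule ℝ E := Submodule.span ℝ {k₀} with hL
        have hWrank : finrank ℝ ↥Lᗮ ≤ D := by
          have h1 := Submodule.finrank_add_finrank_orthogonal L
          have h2 : finrank ℝ L = 1 := finrank_span_singleton hk₀0
          omega
        set π := Lᗮ.orthogonalProjectionOnto with hπ
        have hπsurj : Function.Surjective π :=
          fun y => ⟨y, Submodule.orthogonalProjectionOnto_mem_subspace_eq_self y⟩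
        have hπopen : IsOpenMap π := π.isOpenMap hπsurj
        have hker : ∀ x : E, π x = 0 → ∃ c : ℝ, x = c • k₀ := by
          intro x hx
          have hx' : x ∈ Lᗮᗮ := Submodule.orthogonalProjectionOnto_eq_zero_iff.mp hx
          rw [Submodule.orthogonal_orthogonal] at hx'
          obtain ⟨c, hc⟩ := Submodule.mem_span_singleton.mp hx'
          exact ⟨c, hc.symm⟩
        have habs : ∀ i (x : E), x ∈ Ks i → ∀ c : ℝ, 0 < c → x + c • k₀ ∈ Ks i := by
          intro i x hx c hc
          exact open_cone_add_closure (hso i) (hsc i) (hscone i) hx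
            (smul_mem_closure_cone (hscone i) hc (closure_mono (hsub i) hk₀cl))
        have hconvim : ∀ s : Set E, Convex ℝ s → Convex ℝ (π '' s) := by
          intro s hs
          have := hs.linear_image (π : E →ₗ[ℝ] ↥Lᗮ)
          simpa using this
        have himhull : ∀ s : Set E, π '' (convexHull ℝ s) = convexHull ℝ (π '' s) := by
          intro s
          have := (π : E →ₗ[ℝ] ↥Lᗮ).image_convexHull s
          simpa using this
        refine ih ↥Lᗮ inferInstance inferInstance inferInstance (π '' K) (fun i => π '' Ks i) I J hWrank
          (hπopen _ hKo) (hconvim _ hKc) ⟨π k, k, hk, rfl⟩ ?_ ?_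
          (fun i => hπopen _ (hso i)) (fun i => hconvim _ (hsc i)) ?_
          (fun i => image_mono (hsub i)) ?_ hIJ ?_ ?_
        · -- 0 ∉ π '' K
          rintro ⟨v, hvK, hv0⟩
          obtain ⟨c, rfl⟩ := hker v hv0
          rcases lt_trichotomy c 0 with hc | rfl | hc
          · have := open_cone_add_closure hKo hKc hKcone hvK
              (smul_mem_closure_cone hKcone (neg_pos.mpr hc) hk₀cl)
            rw [← add_smul, add_neg_cancel, zero_smul] at this
            exact hK0 this
          · rw [zero_smul] at hvK
            exact hK0 hvK
          · apply hk₀K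
            have := hKcone c⁻¹ (by positivity) _ hvK
            rwa [smul_smul, inv_mul_cancel₀ (ne_of_gt hc), one_smul] at this
        · -- cone property of π '' K
          rintro c hc v ⟨x, hxK, rfl⟩
          exact ⟨c • x, hKcone c hc x hxK, map_smul π c x⟩
        · -- cone property of π '' Ks i
          rintro i c hc v ⟨x, hx, rfl⟩
          exact ⟨c • x, hscone i c hc x hx, map_smul π c x⟩
        · -- pairwise intersections
          rintro i j hij v ⟨⟨xi, hxi, hπxi⟩, ⟨xj, hxj, hπxj⟩⟩
          have hd : π (xi - xj) = 0 := by rw [map_sub, hπxi, hπxj, sub_self]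
          obtain ⟨c, hc⟩ := hker _ hd
          rcases lt_trichotomy c 0 with hc0 | hc0 | hc0
          · have hxj' : xj = xi + (-c) • k₀ := by
              rw [neg_smul, ← hc]; abel
            have hxjK : xj ∈ K := hpair i j hij
              ⟨by rw [hxj']; exact habs i xi hxi (-c) (by linarith), hxj⟩
            exact ⟨xj, hxjK, hπxj⟩
          · have hxixj : xi = xj := by
              have : xi - xj = 0 := by rw [hc, hc0, zero_smul]
              exact sub_eq_zero.mp this
            exact ⟨xi, hpair i j hij ⟨hxi, hxixj ▸ hxj⟩, hπxi⟩
          · have hxi' : xi = xj + c • k₀ := by rw [← hc]; abel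
            have hxiK : xi ∈ K := hpair i j hij
              ⟨hxi, by rw [hxi']; exact habs j xj hxj c hc0⟩
            exact ⟨xi, hxiK, hπxi⟩
        · -- 0 ∈ hull of union over I
          have h0' : (0 : ↥Lᗮ) ∈ π '' (convexHull ℝ (⋃ i ∈ I, Ks i)) :=
            ⟨0, hI, map_zero π⟩
          rw [himhull, image_iUnion₂] at h0'
          exact h0'
        · have h0' : (0 : ↥Lᗮ) ∈ π '' (convexHull ℝ (⋃ j ∈ J, Ks j)) :=
            ⟨0, hJ, map_zero π⟩
          rw [himhull, image_iUnion₂] at h0'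
          exact h0'



section ConeOf

variable {E : Type*} [NormedAddCommGroup E] [NormedSpace ℝ E] {y : E} {s : Set E}

/-- The open cone of directions from `y` into `s`. -/
def coneOf (y : E) (s : Set E) : Set E := {v | ∃ t : ℝ, 0 < t ∧ y + t • v ∈ s}

lemma coneOf_isOpen (hs : IsOpen s) : IsOpen (coneOf y s) := by
  have h : coneOf y s = ⋃ t ∈ Set.Ioi (0:ℝ), (fun v => y + t • v) ⁻¹' s := by
    ext v
    simp only [coneOf, mem_setOf_eq, mem_iUnion, mem_preimage, Set.mem_Ioi, exists_prop]
  rw [h]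
  exact isOpen_biUnion fun t _ =>
    hs.preimage (continuous_const.add (continuous_id.const_smul t))

lemma coneOf_smul (c : ℝ) (hc : 0 < c) {v : E} (hv : v ∈ coneOf y s) :
    c • v ∈ coneOf y s := by
  obtain ⟨t, ht, hm⟩ := hv
  refine ⟨t * c⁻¹, by positivity, ?_⟩
  rwa [smul_smul, mul_assoc, inv_mul_cancel₀ (ne_of_gt hc), mul_one]

lemma coneOf_mono {s' : Set E} (h : s ⊆ s') : coneOf y s ⊆ coneOf y s' :=
  fun _ ⟨t, ht, hm⟩ => ⟨t, ht, h hm⟩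

lemma coneOf_convex (hs : Convex ℝ s) : Convex ℝ (coneOf y s) := by
  rintro v ⟨t, ht, hvt⟩ w ⟨r, hr, hwr⟩ α β hα hβ hαβ
  rcases eq_or_lt_of_le hα with rfl | hα'
  · have hβ1 : β = 1 := by linarith
    refine ⟨r, hr, ?_⟩
    rw [hβ1, zero_smul, one_smul, zero_add]
    exact hwr
  rcases eq_or_lt_of_le hβ with rfl | hβ'
  · have hα1 : α = 1 := by linarith
    refine ⟨t, ht, ?_⟩
    rw [hα1, zero_smul, one_smul, add_zero]
    exact hvt
  · have hD : 0 < α * r + β * t := by positivity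
    refine ⟨t * r / (α * r + β * t), by positivity, ?_⟩
    have hθ0 : 0 ≤ α * r / (α * r + β * t) := by positivity
    have hθ1 : 0 ≤ 1 - α * r / (α * r + β * t) := by
      rw [sub_nonneg, div_le_one hD]
      nlinarith
    have hmem := hs hvt hwr hθ0 hθ1 (by ring)
    have heq : (α * r / (α * r + β * t)) • (y + t • v)
        + (1 - α * r / (α * r + β * t)) • (y + r • w)
        = y + (t * r / (α * r + β * t)) • (α • v + β • w) := by
      match_scalars
      · ring
      · field_simp
      · field_simp
        ring
    rwa [heq] at hmem

end ConeOf


/-- **Sunflower theorem.** If `{U 0, …, U d}` is a sunflower of convex open sets in `ℝ^d`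
with center `⋂ k, U k`, then any hyperplane `{x | ⟪a, x⟫ = c}` which intersects every `U i`
must also intersect the center. -/
theorem sunflower_hyperplane (d : ℕ) (U : Fin (d + 1) → Set (EuclideanSpace ℝ (Fin d)))
    (hconv : ∀ i, Convex ℝ (U i)) (hopen : ∀ i, IsOpen (U i))
    (hcenter : (⋂ k, U k).Nonempty)
    (hsun : ∀ i j, i ≠ j → U i ∩ U j = ⋂ k, U k)
    (a : EuclideanSpace ℝ (Fin d)) (c : ℝ) (ha : a ≠ 0)
    (hH : ∀ i, ({x : EuclideanSpace ℝ (Fin d) | inner ℝ a x = c} ∩ U i).Nonempty) :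
    ({x : EuclideanSpace ℝ (Fin d) | inner ℝ a x = c} ∩ ⋂ k, U k).Nonempty := by
  classical
  by_contra hcon
  rw [Set.not_nonempty_iff_eq_empty] at hcon
  set C : Set (EuclideanSpace ℝ (Fin d)) := ⋂ k, U k with hC
  have hCo : IsOpen C := isOpen_iInter_of_finite (fun i => hopen i)
  have hCc : Convex ℝ C := convex_iInter (fun i => hconv i)
  obtain ⟨z, hz⟩ := hcenter
  have hCsub : ∀ i, C ⊆ U i := fun i => Set.iInter_subset U i
  have hHC : ∀ x : EuclideanSpace ℝ (Fin d), inner ℝ a x = c → x ∉ C := by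
    intro x hx hxC
    have : x ∈ ({x : EuclideanSpace ℝ (Fin d) | inner ℝ a x = c} ∩ C) := ⟨hx, hxC⟩
    rw [hcon] at this
    exact this
  rcases Nat.eq_zero_or_pos d with rfl | hd
  · apply ha
    ext i
    exact i.elim0
  -- pick points in each petal on the hyperplane
  choose x hx using hH
  have hxH : ∀ i, inner ℝ a (x i) = c := fun i => (hx i).1
  have hxU : ∀ i, x i ∈ U i := fun i => (hx i).2
  -- the points are affinely dependent
  have hnAI : ¬ AffineIndependent ℝ x := by
    intro hAI
    have hcard : Fintype.card (Fin (d + 1)) = d + 1 := by simp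
    have hfr := hAI.finrank_vectorSpan hcard
    set f : EuclideanSpace ℝ (Fin d) →ₗ[ℝ] ℝ := (innerSL ℝ a).toLinearMap with hf
    have hker : vectorSpan ℝ (Set.range x) ≤ LinearMap.ker f := by
      rw [vectorSpan_def, Submodule.span_le]
      intro v hv
      rw [Set.mem_vsub] at hv
      obtain ⟨x1, hx1, x2, hx2, rfl⟩ := hv
      obtain ⟨i, rfl⟩ := hx1
      obtain ⟨j, rfl⟩ := hx2
      rw [SetLike.mem_coe, LinearMap.mem_ker]
      show (inner ℝ a (x i -ᵥ x j) : ℝ) = 0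
      rw [show x i -ᵥ x j = x i - x j from rfl]
      rw [inner_sub_right, hxH i, hxH j, sub_self]
    have h1 : finrank ℝ (vectorSpan ℝ (Set.range x)) ≤ finrank ℝ (LinearMap.ker f) :=
      Submodule.finrank_mono hker
    have h2 := LinearMap.finrank_range_add_finrank_ker f
    have h3 : finrank ℝ (EuclideanSpace ℝ (Fin d)) = d := finrank_euclideanSpace_fin
    have h4 : LinearMap.range f ≠ ⊥ := by
      intro hbot
      have : f a = 0 := by
        have : f a ∈ LinearMap.range f := LinearMap.mem_range_self f a
        rw [hbot] at this
        simpa using this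
      rw [hf] at this
      simp only [ContinuousLinearMap.coe_coe, innerSL_apply_apply] at this
      exact (inner_self_ne_zero.mpr ha) this
    have h5 : 0 < finrank ℝ (LinearMap.range f) := by
      rw [Module.finrank_pos_iff]
      exact Submodule.nontrivial_iff_ne_bot.mpr h4
    omega
  -- Radon partition
  obtain ⟨I, p, hpI, hpJ⟩ := Convex.radon_partition hnAI
  -- p lies on the hyperplane
  have hHconv : Convex ℝ {w : EuclideanSpace ℝ (Fin d) | inner ℝ a w = c} := by
    intro w1 h1 w2 h2 α β hα hβ hαβ
    simp only [mem_setOf_eq] at h1 h2 ⊢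
    rw [inner_add_right, real_inner_smul_right, real_inner_smul_right, h1, h2]
    linear_combination c * hαβ
  have hpH : inner ℝ a p = c := by
    have hsubH : x '' I ⊆ {w : EuclideanSpace ℝ (Fin d) | inner ℝ a w = c} := by
      rintro _ ⟨i, _, rfl⟩
      exact hxH i
    exact convexHull_min hsubH hHconv hpI
  have hpC : p ∉ C := hHC p hpH
  -- walk from p towards z
  set q : ℝ → EuclideanSpace ℝ (Fin d) := fun t => p + t • (z - p) with hq
  have hqc : Continuous q := continuous_const.add (continuous_id.smul continuous_const)
  set A : Set ℝ := {t | t ∈ Set.Icc (0:ℝ) 1 ∧ q t ∈ C} with hA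
  have hq1 : q 1 = z := by simp [hq]
  have h1A : (1:ℝ) ∈ A := ⟨⟨zero_le_one, le_refl 1⟩, by rw [hq1]; exact hz⟩
  have hAne : A.Nonempty := ⟨1, h1A⟩
  have hAbdd : BddBelow A := ⟨0, fun t ht => ht.1.1⟩
  set t1 := sInf A with ht1
  have ht10 : 0 ≤ t1 := le_csInf hAne (fun t ht => ht.1.1)
  have ht11 : t1 ≤ 1 := csInf_le hAbdd h1A
  set y := q t1 with hy
  have hycl : y ∈ closure C := by
    have h1 : t1 ∈ closure A := csInf_mem_closure hAne hAbdd
    have h2 : y ∈ q '' closure A := ⟨t1, h1, rfl⟩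
    have h3 : q '' closure A ⊆ closure (q '' A) := image_closure_subset_closure_image hqc
    refine closure_mono ?_ (h3 h2)
    rintro _ ⟨t, ht, rfl⟩
    exact ht.2
  have hyC : y ∉ C := by
    intro hyC
    rcases eq_or_lt_of_le ht10 with h0 | h0
    · apply hpC
      have hq0 : q 0 = p := by simp [hq]
      rw [hy, ← h0, hq0] at hyC
      exact hyC
    · obtain ⟨δ, hδ, hball⟩ := Metric.isOpen_iff.mp (hCo.preimage hqc) t1 hyC
      have hmpos : 0 < min δ t1 := lt_min hδ h0
      have htA : t1 - min δ t1 / 2 ∈ A := by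
        refine ⟨⟨?_, ?_⟩, ?_⟩
        · have := min_le_right δ t1; linarith
        · linarith
        · apply hball
          rw [Metric.mem_ball, Real.dist_eq]
          have := min_le_left δ t1
          rw [abs_of_nonpos (by linarith)]
          linarith
      have hle := csInf_le hAbdd htA
      rw [← ht1] at hle
      linarith
  -- the cones at y
  set KC : Set (EuclideanSpace ℝ (Fin d)) := coneOf y C with hKC
  set Ks : Fin (d+1) → Set (EuclideanSpace ℝ (Fin d)) := fun i => coneOf y (U i) with hKs
  -- the affine map sending x i into directions of the cones
  set G : EuclideanSpace ℝ (Fin d) →ᵃ[ℝ] EuclideanSpace ℝ (Fin d) :=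
    (AffineEquiv.constVAdd ℝ (EuclideanSpace ℝ (Fin d)) (-y)).toAffineMap.comp
      (AffineMap.homothety z (1 - t1)) with hG
  have hGapp : ∀ u, G u = (1 - t1) • (u - z) + z - y := by
    intro u
    rw [hG]
    simp only [AffineMap.comp_apply, AffineMap.homothety_apply, AffineEquiv.coe_toAffineMap,
      AffineEquiv.constVAdd_apply, vadd_eq_add, vsub_eq_sub]
    module
  have hGp : G p = 0 := by
    rw [hGapp, hy]
    simp only [hq]
    module
  have hGx : ∀ i, y + (1:ℝ) • (G (x i)) = (1 - t1) • (x i) + t1 • z := by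
    intro i
    rw [hGapp]
    module
  have hhull : ∀ S : Set (Fin (d+1)), p ∈ convexHull ℝ (x '' S) →
      (0 : EuclideanSpace ℝ (Fin d)) ∈ convexHull ℝ (⋃ i ∈ S, Ks i) := by
    intro S hpS
    have h1 : G p ∈ G '' (convexHull ℝ (x '' S)) := ⟨p, hpS, rfl⟩
    rw [AffineMap.image_convexHull, hGp] at h1
    refine convexHull_mono ?_ h1
    rintro _ ⟨_, ⟨i, hiS, rfl⟩, rfl⟩
    apply mem_biUnion hiS
    refine ⟨1, one_pos, ?_⟩
    rw [hGx i]
    exact hconv i (hxU i) (hCsub i hz) (by linarith) ht10 (by ring)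
  -- pairwise intersections of cones lie in the central cone
  have hpairKs : ∀ i j, i ≠ j → Ks i ∩ Ks j ⊆ KC := by
    have key : ∀ i j, i ≠ j → ∀ (v : EuclideanSpace ℝ (Fin d)) (t s : ℝ), 0 < t → t ≤ s →
        y + t • v ∈ U i → y + s • v ∈ U j → v ∈ KC := by
      intro i j hij v t s ht hts hti hsj
      have hspos : 0 < s := lt_of_lt_of_le ht hts
      have hmem : y + t • v ∈ U j := by
        rcases eq_or_lt_of_le hts with rfl | hlt
        · exact hsj
        · have hyclj : y ∈ closure (U j) := closure_mono (hCsub j) hycl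
          have hint : y + s • v ∈ interior (U j) := by
            rw [(hopen j).interior_eq]; exact hsj
          have hseg := (hconv j).openSegment_interior_closure_subset_interior hint hyclj
          have hmem2 : y + t • v ∈ openSegment ℝ (y + s • v) y := by
            refine ⟨t/s, 1 - t/s, div_pos ht hspos, ?_, by ring, ?_⟩
            · have : t/s < 1 := by rw [div_lt_one hspos]; exact hlt
              linarith
            · have hs0 : s ≠ 0 := ne_of_gt hspos
              match_scalars <;> field_simp <;> ring
          have := hseg hmem2
          rwa [(hopen j).interior_eq] at this
      have : y + t • v ∈ C := by
        rw [← hsun i j hij]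
        exact ⟨hti, hmem⟩
      exact ⟨t, ht, this⟩
    rintro i j hij v ⟨⟨t, ht, hti⟩, ⟨s, hs, hsj⟩⟩
    rcases le_total t s with h | h
    · exact key i j hij v t s ht h hti hsj
    · exact key j i (Ne.symm hij) v s t hs h hsj hti
  -- contradiction via the cone lemma
  exact cone_sunflower_lemma d (EuclideanSpace ℝ (Fin d))
    inferInstance inferInstance inferInstance
    KC Ks I Iᶜ (le_of_eq finrank_euclideanSpace_fin)
    (coneOf_isOpen hCo) (coneOf_convex hCc)
    ⟨z - y, 1, one_pos, by simpa using hz⟩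
    (by rintro ⟨t, ht, hm⟩; exact hyC (by simpa using hm))
    (fun c hc v hv => coneOf_smul c hc hv)
    (fun i => coneOf_isOpen (hopen i)) (fun i => coneOf_convex (hconv i))
    (fun i c hc v hv => coneOf_smul c hc hv)
    (fun i => coneOf_mono (hCsub i))
    hpairKs disjoint_compl_right (hhull I hpI) (hhull Iᶜ hpJ)
end

section
/- Let {U_1, ..., U_n} be a sunflower of convex open sets in R^d with center U, where n ≥ d+1, and choose points p_i ∈ U_i for 1 ≤ i ≤ n. Then the convex hull of {p_1, ..., p_n} intersects U. -/
/-!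
Adjoin the center as an extra petal, represented by a point `c` of it. The `n + 1 ≥ d + 2`
points `c, p₁, …, pₙ` admit a Radon partition, and the convex hulls of the two parts can only
meet in the center: for disjoint sets of indices, the convex hulls of the corresponding unions of
petals meet exactly in the center. This follows by induction from the case of three convex open
sets `P, U, Q` with `P ∩ U = P ∩ Q ≠ ∅`, where `P ∩ conv (U ∪ Q) ⊆ U`. Indeed, let `z ∈ P \ U`
lie on a segment `[b, b']` with `b ∈ U`, `b' ∈ Q`, and let `y` be the point where the ray from a
common point through `z` leaves `U`. Then `y ∈ P` lies in the closures of both `U` and `Q`, so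
moving `y` slightly towards `b` and towards `b'` gives two points of `P ∩ U`, and the same convex
combination of them is a point of `U` on that ray beyond `y`, which is absurd.
-/

open Set Filter Topology

/-- Unlike in the usual definition, the center `⋂ k, U k` may be empty. -/
def IsSunflower {α ι : Type*} (U : ι → Set α) : Prop :=
  ∀ i j, i ≠ j → U i ∩ U j = ⋂ k, U k

theorem iInter_option_elim_iInter {α ι : Type*} (U : ι → Set α) :
    ⋂ o : Option ι, o.elim (⋂ k, U k) U = ⋂ k, U k := by
  simp [iInter_option]

theorem IsSunflower.option_elim {α ι : Type*} {U : ι → Set α} (hU : IsSunflower U) :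
    IsSunflower fun o : Option ι => o.elim (⋂ k, U k) U := by
  rintro (_ | i) (_ | j) hij <;>
    simp only [iInter_option_elim_iInter, Option.elim_none, Option.elim_some]
  · exact absurd rfl hij
  · exact inter_eq_left.2 (iInter_subset U j)
  · exact inter_eq_right.2 (iInter_subset U i)
  · exact hU i j fun h => hij (congrArg some h)

theorem not_affineIndependent_of_finrank_add_one_lt {k V P ι : Type*} [DivisionRing k]
    [AddCommGroup V] [Module k V] [AddTorsor V P] [FiniteDimensional k V] [Fintype ι]
    (p : ι → P) (h : Module.finrank k V + 1 < Fintype.card ι) : ¬AffineIndependent k p :=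
  fun hp => by
    have := hp.card_le_finrank_succ
    have := (vectorSpan k (range p)).finrank_le
    omega

section TopologicalVectorSpace

variable {E : Type*} [AddCommGroup E] [Module ℝ E] [TopologicalSpace E]
  [IsTopologicalAddGroup E] [ContinuousSMul ℝ E]

theorem IsOpen.eventually_add_smul_sub_mem {P : Set E} (hP : IsOpen P) {y : E} (hy : y ∈ P)
    (a : E) : ∀ᶠ ε in 𝓝 (0 : ℝ), y + ε • (a - y) ∈ P := by
  have hcont : Continuous fun ε : ℝ => y + ε • (a - y) := by fun_prop
  exact hcont.continuousAt.eventually_mem (by simpa using hP.mem_nhds hy)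

theorem mem_of_mem_segment_of_inter_eq_of_zero_mem {P U Q : Set E}
    (hPc : Convex ℝ P) (hPo : IsOpen P) (hUc : Convex ℝ U) (hUo : IsOpen U)
    (hQc : Convex ℝ Q) (hQo : IsOpen Q) (hPUQ : P ∩ U = P ∩ Q) (h0 : (0 : E) ∈ P ∩ U)
    {b b' z : E} (hb : b ∈ U) (hb' : b' ∈ Q) (hzP : z ∈ P) (hz : z ∈ segment ℝ b b') :
    z ∈ U := by
  by_contra hzU
  have hU0 : U ∈ 𝓝 0 := hUo.mem_nhds h0.2
  have hgauge : ∀ x, gauge U x < 1 ↔ x ∈ U := fun x => by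
    rw [gauge_lt_one_iff_mem_interior hUc hU0, hUo.interior_eq]
  set T := gauge U z
  have hT : 1 ≤ T := not_lt.1 ((hgauge z).not.2 hzU)
  have hT0 : 0 < T := one_pos.trans_le hT
  -- `y` is where the ray from `0` through `z` leaves `U`
  set y := T⁻¹ • z
  have hzy : z = T • y := by simp [y, smul_smul, hT0.ne']
  have hyP : y ∈ P :=
    hPc.smul_mem_of_zero_mem h0.1 hzP ⟨inv_nonneg.2 hT0.le, inv_le_one_of_one_le₀ hT⟩
  have hgy : gauge U y = 1 := by
    rw [gauge_smul_of_nonneg (inv_nonneg.2 hT0.le), smul_eq_mul, inv_mul_cancel₀ hT0.ne']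
  have hyU : y ∈ closure U := (gauge_le_one_iff_mem_closure hUc hU0).1 hgy.le
  have hyQ : y ∈ closure Q :=
    closure_mono (hPUQ ▸ inter_subset_right) (hPo.inter_closure ⟨hyP, hyU⟩)
  obtain ⟨ε, ⟨⟨hwP, hw'P⟩, hε1⟩, hε0⟩ :=
    (((hPo.eventually_add_smul_sub_mem hyP b).and (hPo.eventually_add_smul_sub_mem hyP b')).and
      (eventually_le_nhds one_pos) |>.filter_mono nhdsWithin_le_nhds |>.and
      (self_mem_nhdsWithin (s := Ioi 0))).exists
  have hwU : y + ε • (b - y) ∈ U := by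
    simpa [hUo.interior_eq] using
      hUc.add_smul_sub_mem_interior' hyU (by rwa [hUo.interior_eq]) ⟨hε0, hε1⟩
  have hw'Q : y + ε • (b' - y) ∈ Q := by
    simpa [hQo.interior_eq] using
      hQc.add_smul_sub_mem_interior' hyQ (by rwa [hQo.interior_eq]) ⟨hε0, hε1⟩
  have hw'U : y + ε • (b' - y) ∈ U := (hPUQ.symm ▸ ⟨hw'P, hw'Q⟩ : _ ∈ P ∩ U).2
  obtain ⟨θ, θ', hθ, hθ', hθθ', hzbb'⟩ := hz
  have hm : θ • (y + ε • (b - y)) + θ' • (y + ε • (b' - y)) = (1 - ε + ε * T) • y := by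
    calc _ = (θ + θ') • (1 - ε) • y + ε • (θ • b + θ' • b') := by module
      _ = (1 - ε + ε * T) • y := by rw [hθθ', hzbb', hzy]; module
  have hmU := hUc hwU hw'U hθ hθ' hθθ'
  rw [hm, ← hgauge, gauge_smul_of_nonneg (by nlinarith), smul_eq_mul, hgy] at hmU
  nlinarith

theorem inter_convexJoin_subset_left_of_inter_eq {P U Q : Set E}
    (hPc : Convex ℝ P) (hPo : IsOpen P) (hUc : Convex ℝ U) (hUo : IsOpen U)
    (hQc : Convex ℝ Q) (hQo : IsOpen Q) (hPUQ : P ∩ U = P ∩ Q) (hne : (P ∩ U).Nonempty) :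
    P ∩ convexJoin ℝ U Q ⊆ U := by
  rintro z ⟨hzP, hzUQ⟩
  obtain ⟨b, hb, b', hb', hz⟩ := mem_convexJoin.1 hzUQ
  obtain ⟨c, hc⟩ := hne
  have htr : ∀ {S : Set E} {x : E}, x ∈ S → -c + x ∈ (c + ·) ⁻¹' S := by simp
  simpa using mem_of_mem_segment_of_inter_eq_of_zero_mem
    (hPc.translate_preimage_right c) (hPo.preimage (continuous_const_add c))
    (hUc.translate_preimage_right c) (hUo.preimage (continuous_const_add c))
    (hQc.translate_preimage_right c) (hQo.preimage (continuous_const_add c))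
    (by rw [← preimage_inter, hPUQ, preimage_inter]) (by simpa using hc)
    (htr hb) (htr hb') (htr hzP) ((mem_segment_translate ℝ (-c)).2 hz)

theorem inter_convexHull_biUnion_subset {ι : Type*} {P C : Set E} {U : ι → Set E}
    (hPc : Convex ℝ P) (hPo : IsOpen P) (hUc : ∀ i, Convex ℝ (U i)) (hUo : ∀ i, IsOpen (U i))
    (hC : C.Nonempty) (hCP : C ⊆ P) (hCU : ∀ i, C ⊆ U i) {s : Finset ι}
    (hPU : ∀ i ∈ s, P ∩ U i ⊆ C) :
    P ∩ convexHull ℝ (⋃ i ∈ s, U i) ⊆ C := by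
  classical
  induction s using Finset.induction_on with
  | empty => simp
  | insert a s ha ih =>
    rw [Finset.set_biUnion_insert]
    have hPa := hPU a (s.mem_insert_self a)
    rcases s.eq_empty_or_nonempty with rfl | ⟨j, hj⟩
    · simpa [(hUc a).convexHull_eq] using hPa
    have hPH := ih fun i hi => hPU i (Finset.mem_insert_of_mem hi)
    have hCs : C ⊆ ⋃ i ∈ s, U i := (hCU j).trans (subset_biUnion_of_mem (u := U) hj)
    have hCH : C ⊆ convexHull ℝ (⋃ i ∈ s, U i) := hCs.trans (subset_convexHull ℝ _)
    have hPaH : P ∩ U a = P ∩ convexHull ℝ (⋃ i ∈ s, U i) :=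
      (hPa.trans (subset_inter hCP hCH)).antisymm (hPH.trans (subset_inter hCP (hCU a)))
    rw [convexHull_union (hC.mono (hCU a)) (hC.mono hCs), (hUc a).convexHull_eq]
    exact fun z hz => hPa ⟨hz.1, inter_convexJoin_subset_left_of_inter_eq hPc hPo (hUc a)
      (hUo a) (convex_convexHull ℝ _) (isOpen_biUnion fun i _ => hUo i).convexHull hPaH
      (hC.mono (subset_inter hCP (hCU a))) hz⟩

theorem IsSunflower.convexHull_biUnion_inter_subset {ι : Type*} {U : ι → Set E}
    (hU : IsSunflower U) (hUc : ∀ i, Convex ℝ (U i)) (hUo : ∀ i, IsOpen (U i))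
    (hC : (⋂ k, U k).Nonempty) {s t : Finset ι} (hst : Disjoint s t) :
    convexHull ℝ (⋃ i ∈ s, U i) ∩ convexHull ℝ (⋃ j ∈ t, U j) ⊆ ⋂ k, U k := by
  rcases s.eq_empty_or_nonempty with rfl | ⟨i, hi⟩
  · simp
  have hCs : (⋂ k, U k) ⊆ convexHull ℝ (⋃ i ∈ s, U i) :=
    ((iInter_subset U i).trans (subset_biUnion_of_mem (u := U) hi)).trans (subset_convexHull ℝ _)
  refine inter_convexHull_biUnion_subset (convex_convexHull ℝ _)
    (isOpen_biUnion fun i _ => hUo i).convexHull hUc hUo hC hCs (iInter_subset U) fun j hj => ?_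
  rw [inter_comm]
  refine inter_convexHull_biUnion_subset (hUc j) (hUo j) hUc hUo hC (iInter_subset U j)
    (iInter_subset U) fun i hi => (hU j i ?_).subset
  rintro rfl
  exact Finset.disjoint_left.1 hst hi hj

theorem IsSunflower.convexHull_image_inter_compl_subset {ι : Type*} [Finite ι] {U : ι → Set E}
    (hU : IsSunflower U) (hUc : ∀ i, Convex ℝ (U i)) (hUo : ∀ i, IsOpen (U i))
    (hC : (⋂ k, U k).Nonempty) {f : ι → E} (hf : ∀ i, f i ∈ U i) (S : Set ι) :
    convexHull ℝ (f '' S) ∩ convexHull ℝ (f '' Sᶜ) ⊆ ⋂ k, U k := by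
  classical
  have := Fintype.ofFinite ι
  have himage : ∀ (S : Set ι) (s : Finset ι), (∀ i ∈ S, i ∈ s) →
      convexHull ℝ (f '' S) ⊆ convexHull ℝ (⋃ i ∈ s, U i) := by
    refine fun S s hSs => convexHull_mono ?_
    rintro - ⟨i, hi, rfl⟩
    exact mem_biUnion (hSs i hi) (hf i)
  refine (inter_subset_inter (himage S (Finset.univ.filter (· ∈ S)) (by simp))
    (himage Sᶜ (Finset.univ.filter (· ∉ S)) (by simp))).trans ?_
  exact hU.convexHull_biUnion_inter_subset hUc hUo hC
    (Finset.disjoint_filter_filter_not Finset.univ Finset.univ (· ∈ S))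

end TopologicalVectorSpace

/-- Corollary 2.2: if `{U 0, …, U (n-1)}` is a sunflower of convex open sets in `ℝ^d` with
center `⋂ k, U k`, where `n ≥ d + 1`, and `p i ∈ U i` for each `i`, then the convex hull of
the points `p i` intersects the center. -/
theorem sunflower_convexHull (d n : ℕ) (hn : d + 1 ≤ n)
    (U : Fin n → Set (EuclideanSpace ℝ (Fin d)))
    (hconv : ∀ i, Convex ℝ (U i)) (hopen : ∀ i, IsOpen (U i))
    (hcenter : (⋂ k, U k).Nonempty)
    (hsun : ∀ i j, i ≠ j → U i ∩ U j = ⋂ k, U k)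
    (p : Fin n → EuclideanSpace ℝ (Fin d)) (hp : ∀ i, p i ∈ U i) :
    (convexHull ℝ (Set.range p) ∩ ⋂ k, U k).Nonempty := by
  obtain ⟨c, hc⟩ := hcenter
  let V : Option (Fin n) → Set (EuclideanSpace ℝ (Fin d)) := fun o => o.elim (⋂ k, U k) U
  let f : Option (Fin n) → EuclideanSpace ℝ (Fin d) := fun o => o.elim c p
  have hVc : ∀ o, Convex ℝ (V o) := by rintro (_ | i); exacts [convex_iInter hconv, hconv i]
  have hVo : ∀ o, IsOpen (V o) := by
    rintro (_ | i); exacts [isOpen_iInter_of_finite hopen, hopen i]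
  have hfV : ∀ o, f o ∈ V o := by rintro (_ | i); exacts [hc, hp i]
  have hVcenter : ⋂ o, V o = ⋂ k, U k := iInter_option_elim_iInter U
  obtain ⟨M, q, hqM, hqMc⟩ := Convex.radon_partition (not_affineIndependent_of_finrank_add_one_lt
    (k := ℝ) f (by simpa using hn))
  have hqp : q ∈ convexHull ℝ (range p) := by
    wlog hM : none ∉ M generalizing M
    · exact this Mᶜ hqMc (by rwa [compl_compl]) (by simpa using hM)
    refine convexHull_mono ?_ hqM
    rintro - ⟨(_ | i), hi, rfl⟩
    exacts [absurd hi hM, ⟨i, rfl⟩]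
  have hq := IsSunflower.option_elim hsun |>.convexHull_image_inter_compl_subset hVc hVo
    (by rw [hVcenter]; exact ⟨c, hc⟩) hfV M ⟨hqM, hqMc⟩
  exact ⟨q, hqp, hVcenter ▸ hq⟩
end

section
/- Let {U_1, ..., U_{n+1}} be a sunflower of convex open sets in R^d with center U, and let k ≤ min{d-1, n-1}. Then any k-dimensional affine subspace H of R^d that intersects all U_i must intersect U. -/
/-!
Pick `x i ∈ H ∩ U i`. These `n + 1` points lie in an affine space of dimension `k < n`, so they
are affinely dependent, and Radon's theorem splits them into two groups whose convex hulls share a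
point `y ∈ H`. For a sunflower of open convex sets, the convex hulls of the unions of two disjoint
groups of petals meet only in the center, so `y` lies in the center.

That last fact rests on the following: if open convex sets `V i` meet an open convex set `W` only
inside the open convex center `C`, then so does the convex hull of `⋃ i, V i`. Otherwise, walking
from `C` to a point of that hull in `W \ C` we meet a boundary point `w ∈ W` of `C`; separate `w`
from `C` by a functional `f`. Near `w` every petal lies in `C`, so below the level `f w`, and by
convexity the whole petal does; hence so does the hull, which contains `w`.
-/

open Set Filter Topology

theorem IsPreconnected.inter_frontier_nonempty {α : Type*} [TopologicalSpace α] {s t : Set α}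
    (hs : IsPreconnected s) (hst : (s ∩ t).Nonempty) (hsnt : (s \ t).Nonempty) :
    (s ∩ frontier t).Nonempty := by
  by_contra h
  have hint : ∀ x ∈ s, x ∈ closure t → x ∈ interior t := fun x hx hxt => by
    by_contra hxi
    exact h ⟨x, hx, hxt, hxi⟩
  have hsub : s ⊆ interior t ∪ (closure t)ᶜ := fun x hx => by
    by_cases hxt : x ∈ closure t
    · exact Or.inl (hint x hx hxt)
    · exact Or.inr hxt
  obtain ⟨x, hxs, hxt⟩ := hst
  have := hs.subset_left_of_subset_union isOpen_interior isClosed_closure.isOpen_compl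
    (disjoint_compl_right_iff_subset.mpr interior_subset_closure) hsub
    ⟨x, hxs, hint x hxs (subset_closure hxt)⟩
  obtain ⟨y, hys, hyt⟩ := hsnt
  exact hyt (interior_subset (this hys))

theorem AffineIndependent.card_le_finrank_direction_succ {k V P ι : Type*} [DivisionRing k]
    [AddCommGroup V] [Module k V] [AddTorsor V P] [Fintype ι] {p : ι → P}
    {H : AffineSubspace k P} [FiniteDimensional k H.direction]
    (hp : AffineIndependent k p) (hpH : ∀ i, p i ∈ H) :
    Fintype.card ι ≤ Module.finrank k H.direction + 1 := by
  have hspan : vectorSpan k (range p) ≤ H.direction := by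
    rw [AffineSubspace.direction_eq_vectorSpan]
    exact vectorSpan_mono k (range_subset_iff.2 hpH)
  exact hp.card_le_finrank_succ.trans (Nat.add_le_add_right (Submodule.finrank_mono hspan) 1)

section

variable {E : Type*} [AddCommGroup E] [Module ℝ E] [TopologicalSpace E]
  [IsTopologicalAddGroup E] [ContinuousSMul ℝ E]

theorem IsOpen.apply_lt_of_eventually_apply_lt {A : Set E} (hAo : IsOpen A) (hAc : Convex ℝ A)
    {f : E →L[ℝ] ℝ} {w : E} (hwA : w ∈ closure A) (hf : ∀ᶠ a in 𝓝 w, a ∈ A → f a < f w)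
    {u : E} (hu : u ∈ A) : f u < f w := by
  have hseg : openSegment ℝ w u ⊆ A := by
    rw [← hAo.interior_eq] at hu ⊢
    exact hAc.openSegment_closure_interior_subset_interior hwA hu
  have hnear : ∀ᶠ τ in 𝓝[>] (0 : ℝ), f (AffineMap.lineMap w u τ) < f w := by
    have hcont : Tendsto (fun τ : ℝ => AffineMap.lineMap w u τ) (𝓝 0) (𝓝 w) := by
      simpa using ((AffineMap.lineMap_continuous (R := ℝ) (p := w) (q := u)).tendsto 0)
    filter_upwards [nhdsWithin_le_nhds (hcont.eventually hf), Ioo_mem_nhdsGT zero_lt_one]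
      with τ hτ hτ01 using
      hτ (hseg (openSegment_eq_image_lineMap ℝ w u ▸ mem_image_of_mem _ hτ01))
  obtain ⟨τ, hτ, hτ0⟩ := (hnear.and self_mem_nhdsWithin).exists
  rw [AffineMap.lineMap_apply_module] at hτ
  simp only [map_add, map_smul, smul_eq_mul] at hτ
  change 0 < τ at hτ0
  nlinarith

theorem convexHull_iUnion_inter_subset {ι : Type*} {C W : Set E} {V : ι → Set E}
    (hCo : IsOpen C) (hCc : Convex ℝ C) (hCne : C.Nonempty) (hWo : IsOpen W) (hWc : Convex ℝ W)
    (hCW : C ⊆ W) (hVo : ∀ i, IsOpen (V i)) (hVc : ∀ i, Convex ℝ (V i)) (hCV : ∀ i, C ⊆ V i)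
    (hVW : ∀ i, V i ∩ W ⊆ C) :
    convexHull ℝ (⋃ i, V i) ∩ W ⊆ C := by
  rintro z ⟨hzV, hzW⟩
  by_contra hzC
  obtain ⟨p, hp⟩ := hCne
  obtain ⟨i₀, -⟩ := mem_iUnion.1 (convexHull_nonempty_iff.1 ⟨z, hzV⟩).some_mem
  obtain ⟨w, hwseg, hwfr⟩ := (convex_segment p z).isPreconnected.inter_frontier_nonempty
    ⟨p, left_mem_segment ℝ p z, hp⟩ ⟨z, right_mem_segment ℝ p z, hzC⟩
  have hwW : w ∈ W := hWc.segment_subset (hCW hp) hzW hwseg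
  have hwV : w ∈ convexHull ℝ (⋃ i, V i) := (convex_convexHull ℝ _).segment_subset
    (subset_convexHull ℝ _ (mem_iUnion_of_mem i₀ (hCV i₀ hp))) hzV hwseg
  have hwnC : w ∉ C := fun h => hwfr.2 (hCo.interior_eq.symm ▸ h)
  obtain ⟨f, hf⟩ := geometric_hahn_banach_open_point hCc hCo hwnC
  have hVf : ∀ i, V i ⊆ {x | f x < f w} := fun i u hu =>
    (hVo i).apply_lt_of_eventually_apply_lt (hVc i) (closure_mono (hCV i) hwfr.1)
      (eventually_of_mem (hWo.mem_nhds hwW) fun a haW haV => hf a (hVW i ⟨haV, haW⟩)) hu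
  exact lt_irrefl (f w)
    (convexHull_min (iUnion_subset hVf) (convex_halfSpace_lt f.isLinear (f w)) hwV)

theorem convexHull_biUnion_inter_convexHull_biUnion_compl_subset {ι : Type*} {C : Set E}
    {U : ι → Set E} (hCo : IsOpen C) (hCc : Convex ℝ C) (hCne : C.Nonempty)
    (hUo : ∀ i, IsOpen (U i)) (hUc : ∀ i, Convex ℝ (U i)) (hCU : ∀ i, C ⊆ U i)
    (hUU : ∀ i j, i ≠ j → U i ∩ U j ⊆ C) (I : Set ι) :
    convexHull ℝ (⋃ i ∈ I, U i) ∩ convexHull ℝ (⋃ j ∈ Iᶜ, U j) ⊆ C := by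
  rcases Iᶜ.eq_empty_or_nonempty with hI | ⟨j₀, hj₀⟩
  · simp [hI]
  rw [biUnion_eq_iUnion, biUnion_eq_iUnion]
  have hUiW : ∀ i : I, U i ∩ convexHull ℝ (⋃ j : ↥Iᶜ, U j) ⊆ C := fun i => by
    rw [inter_comm]
    exact convexHull_iUnion_inter_subset hCo hCc hCne (hUo i) (hUc i) (hCU i)
      (fun j => hUo j) (fun j => hUc j) (fun j => hCU j)
      (fun j => hUU j i fun h => j.2 (h ▸ i.2))
  have hCW : C ⊆ convexHull ℝ (⋃ j : ↥Iᶜ, U j) :=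
    (hCU j₀).trans <|
      (subset_iUnion (fun j : ↥Iᶜ => U j) ⟨j₀, hj₀⟩).trans (subset_convexHull ℝ _)
  exact convexHull_iUnion_inter_subset hCo hCc hCne
    (isOpen_iUnion fun j : ↥Iᶜ => hUo j).convexHull (convex_convexHull ℝ _) hCW
    (fun i => hUo i) (fun i => hUc i) (fun i => hCU i) hUiW

end

theorem sunflower_affine_subspace_general (d n k : ℕ) (hk : k ≤ min (d - 1) (n - 1))
    (U : Fin (n + 1) → Set (EuclideanSpace ℝ (Fin d)))
    (hconv : ∀ i, Convex ℝ (U i)) (hopen : ∀ i, IsOpen (U i))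
    (hcenter : (⋂ j, U j).Nonempty)
    (hsun : ∀ i j, i ≠ j → U i ∩ U j = ⋂ l, U l)
    (H : AffineSubspace ℝ (EuclideanSpace ℝ (Fin d)))
    (hdim : Module.finrank ℝ H.direction = k)
    (hH : ∀ i, ((H : Set (EuclideanSpace ℝ (Fin d))) ∩ U i).Nonempty) :
    ((H : Set (EuclideanSpace ℝ (Fin d))) ∩ ⋂ j, U j).Nonempty := by
  rcases Nat.eq_zero_or_pos n with rfl | hn
  · rw [show (⋂ j, U j) = U 0 from iInf_unique (ι := Fin 1) U]
    exact hH 0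
  choose x hxH hxU using hH
  have hdep : ¬ AffineIndependent ℝ x := fun hind => by
    have := hind.card_le_finrank_direction_succ hxH
    simp only [Fintype.card_fin, hdim] at this
    omega
  obtain ⟨I, y, hyI, hyIc⟩ := Convex.radon_partition hdep
  have himage : ∀ J : Set (Fin (n + 1)), x '' J ⊆ ⋃ i ∈ J, U i := by
    rintro J _ ⟨i, hi, rfl⟩
    exact mem_biUnion hi (hxU i)
  refine ⟨y, H.convex.convexHull_subset_iff.2 (image_subset_iff.2 fun i _ => hxH i) hyI, ?_⟩
  exact convexHull_biUnion_inter_convexHull_biUnion_compl_subset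
    (isOpen_iInter_of_finite hopen) (convex_iInter hconv) hcenter hopen hconv (iInter_subset U)
    (fun i j hij => (hsun i j hij).le) I
    ⟨convexHull_mono (himage I) hyI, convexHull_mono (himage Iᶜ) hyIc⟩

/-- Corollary 2.3: if `{U 0, …, U n}` is a sunflower of convex open sets in `ℝ^d` with
center `⋂ k, U k`, and `k ≤ min (d-1) (n-1)`, then any `k`-dimensional affine subspace `H`
of `ℝ^d` intersecting all the `U i` must intersect the center. -/
theorem sunflower_affine_subspace (d n k : ℕ) (hk : k ≤ min (d - 1) (n - 1))
    (U : Fin (n + 1) → Set (EuclideanSpace ℝ (Fin d)))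
    (hconv : ∀ i, Convex ℝ (U i)) (hopen : ∀ i, IsOpen (U i))
    (hcenter : (⋂ j, U j).Nonempty)
    (hsun : ∀ i j, i ≠ j → U i ∩ U j = ⋂ l, U l)
    (H : AffineSubspace ℝ (EuclideanSpace ℝ (Fin d)))
    (hHne : (H : Set (EuclideanSpace ℝ (Fin d))).Nonempty)
    (hdim : Module.finrank ℝ H.direction = k)
    (hH : ∀ i, ((H : Set (EuclideanSpace ℝ (Fin d))) ∩ U i).Nonempty) :
    ((H : Set (EuclideanSpace ℝ (Fin d))) ∩ ⋂ j, U j).Nonempty :=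
  sunflower_affine_subspace_general d n k hk U hconv hopen hcenter hsun H hdim hH
end

section
/- If C and D are disjoint subsets of R^d, C is the convex hull of finitely many points, U is a nonempty convex open set disjoint from C, and {U_1,...,U_{d+1}} is a sunflower of convex open sets with center U such that each U_i contains one of the points spanning C, then there exists a hyperplane intersecting every U_i but not U. -/
/-!
Strictly separate the open convex center `⋂ k, U k` from the convex hull of the `p i` by a
hyperplane `⟪a, x⟫ = c`, with the center on the open side `⟪a, x⟫ < c`. Each `U i` is convex and
contains both a point of the center and the point `p i` on the closed side `c ≤ ⟪a, x⟫`, so the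
segment between them crosses the hyperplane inside `U i`.
-/

open Set

theorem Convex.exists_apply_eq {E : Type*} [AddCommGroup E] [Module ℝ E] {S : Set E}
    (hS : Convex ℝ S) (f : E →ₗ[ℝ] ℝ) {w q : E} (hw : w ∈ S) (hq : q ∈ S) {c : ℝ}
    (hwc : f w ≤ c) (hcq : c ≤ f q) : ∃ x ∈ S, f x = c :=
  (hS.linear_image f).ordConnected.out ⟨w, hw, rfl⟩ ⟨q, hq, rfl⟩ ⟨hwc, hcq⟩

theorem exists_inner_lt_le_of_disjoint_isOpen {E : Type*} [NormedAddCommGroup E]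
    [InnerProductSpace ℝ E] [CompleteSpace E] {W C : Set E} (hWconv : Convex ℝ W)
    (hWopen : IsOpen W) (hCconv : Convex ℝ C) (hW : W.Nonempty) (hC : C.Nonempty)
    (hWC : Disjoint W C) :
    ∃ (a : E) (c : ℝ), a ≠ 0 ∧ (∀ x ∈ W, inner ℝ a x < c) ∧ ∀ x ∈ C, c ≤ inner ℝ a x := by
  obtain ⟨f, c, hfW, hfC⟩ := geometric_hahn_banach_open hWconv hWopen hCconv hWC
  set a := (InnerProductSpace.toDual ℝ E).symm f
  have hinner : ∀ x, inner ℝ a x = f x := fun _ => InnerProductSpace.toDual_symm_apply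
  refine ⟨a, c, fun ha => ?_, fun x hx => hinner x ▸ hfW x hx, fun x hx => hinner x ▸ hfC x hx⟩
  obtain ⟨w, hw⟩ := hW
  obtain ⟨q, hq⟩ := hC
  have hwc := hinner w ▸ hfW w hw
  have hcq := hinner q ▸ hfC q hq
  simp only [ha, inner_zero_left] at hwc hcq
  linarith

theorem sunflower_separating_hyperplane_general (d : ℕ)
    (U : Fin (d + 1) → Set (EuclideanSpace ℝ (Fin d)))
    (hconv : ∀ i, Convex ℝ (U i)) (hopen : ∀ i, IsOpen (U i))
    (hcenter : (⋂ k, U k).Nonempty)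
    (p : Fin (d + 1) → EuclideanSpace ℝ (Fin d)) (hp : ∀ i, p i ∈ U i)
    (hdisj : Disjoint (convexHull ℝ (Set.range p)) (⋂ k, U k)) :
    ∃ (a : EuclideanSpace ℝ (Fin d)) (c : ℝ), a ≠ 0 ∧
      (∀ i, ({x : EuclideanSpace ℝ (Fin d) | inner ℝ a x = c} ∩ U i).Nonempty) ∧
      ({x : EuclideanSpace ℝ (Fin d) | inner ℝ a x = c} ∩ ⋂ k, U k) = ∅ := by
  have hpC : ∀ i, p i ∈ convexHull ℝ (range p) := fun i => subset_convexHull ℝ _ ⟨i, rfl⟩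
  obtain ⟨a, c, ha, hcenter_lt, hC_le⟩ := exists_inner_lt_le_of_disjoint_isOpen
    (convex_iInter hconv) (isOpen_iInter_of_finite hopen) (convex_convexHull ℝ _) hcenter
    ⟨p 0, hpC 0⟩ hdisj.symm
  obtain ⟨w, hw⟩ := hcenter
  refine ⟨a, c, ha, fun i => ?_, ?_⟩
  · obtain ⟨x, hxU, hxc⟩ := (hconv i).exists_apply_eq (innerₛₗ ℝ a) (mem_iInter.mp hw i) (hp i)
      (hcenter_lt w hw).le (hC_le _ (hpC i))
    exact ⟨x, hxc, hxU⟩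
  · refine eq_empty_of_forall_notMem fun x ⟨hxc, hxU⟩ => ?_
    exact (hcenter_lt x hxU).ne hxc

/-- The separation step of Corollary 2.2: if `{U 0, …, U d}` is a sunflower of convex open
sets in `ℝ^d` whose (nonempty, convex, open) center `⋂ k, U k` is disjoint from
`C = conv {p 0, …, p d}` where `p i ∈ U i`, then there is a hyperplane intersecting every
`U i` but not the center. -/
theorem sunflower_separating_hyperplane (d : ℕ)
    (U : Fin (d + 1) → Set (EuclideanSpace ℝ (Fin d)))
    (hconv : ∀ i, Convex ℝ (U i)) (hopen : ∀ i, IsOpen (U i))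
    (hcenter : (⋂ k, U k).Nonempty)
    (hsun : ∀ i j, i ≠ j → U i ∩ U j = ⋂ k, U k)
    (p : Fin (d + 1) → EuclideanSpace ℝ (Fin d)) (hp : ∀ i, p i ∈ U i)
    (hdisj : Disjoint (convexHull ℝ (Set.range p)) (⋂ k, U k)) :
    ∃ (a : EuclideanSpace ℝ (Fin d)) (c : ℝ), a ≠ 0 ∧
      (∀ i, ({x : EuclideanSpace ℝ (Fin d) | inner ℝ a x = c} ∩ U i).Nonempty) ∧
      ({x : EuclideanSpace ℝ (Fin d) | inner ℝ a x = c} ∩ ⋂ k, U k) = ∅ :=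
  sunflower_separating_hyperplane_general d U hconv hopen hcenter p hp hdisj
end

section
/- Let f : C → D be a surjective morphism of combinatorial codes, and suppose C and D have the same (finite) number of trunks. Then f is a bijection, and moreover f induces a bijection between the trunks of C and the trunks of D via preimage. -/
/-- The trunk of `σ` in the code `C`. -/
def Tk {n : ℕ} (C : Set (Finset (Fin n))) (σ : Finset (Fin n)) : Set (Finset (Fin n)) :=
  {c ∈ C | σ ⊆ c}

/-- `T` is a trunk in the code `C`. -/
def IsTrunk {n : ℕ} (C T : Set (Finset (Fin n))) : Prop :=
  T = ∅ ∨ ∃ σ, T = Tk C σ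

/-- `f` is a morphism from the code `C` to the code `D`. -/
def IsMorphismOn {n m : ℕ} (C : Set (Finset (Fin n))) (D : Set (Finset (Fin m)))
    (f : Finset (Fin n) → Finset (Fin m)) : Prop :=
  (∀ c ∈ C, f c ∈ D) ∧ ∀ T, IsTrunk D T → IsTrunk C (C ∩ f ⁻¹' T)

/-!
Pulling back along `f` is injective on subsets of `D` because `f` maps onto `D`, so by the
count of trunks it is a bijection onto the trunks of `C`. In particular the trunk `Tk C c`
of a codeword is a pullback `C ∩ f ⁻¹' T`, hence contains every `c'` with `f c' = f c`;
since `c` is its least element, `c ⊆ c'`, and by symmetry `c = c'`.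
-/

theorem Set.MapsTo.surjOn_of_injOn_of_ncard_le {α β : Type*} {s : Set α} {t : Set β}
    {f : α → β} (hmaps : Set.MapsTo f s t) (hinj : Set.InjOn f s) (hle : t.ncard ≤ s.ncard)
    (ht : t.Finite) : Set.SurjOn f s t := by
  refine (Set.eq_of_subset_of_ncard_le hmaps.image_subset ?_ ht).symm.subset
  rwa [hinj.ncard_image]

theorem Set.injOn_inter_preimage {α β : Type*} (C : Set α) (f : α → β) :
    Set.InjOn (fun T => C ∩ f ⁻¹' T) {T | T ⊆ f '' C} := by
  intro T hT T' hT' h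
  rw [← Set.inter_eq_right.mpr hT, ← Set.inter_eq_right.mpr hT', ← Set.image_inter_preimage,
    ← Set.image_inter_preimage]
  exact congrArg (f '' ·) h

theorem mem_tk_self {n : ℕ} {C : Set (Finset (Fin n))} {c : Finset (Fin n)} (hc : c ∈ C) :
    c ∈ Tk C c :=
  ⟨hc, subset_rfl⟩

theorem IsTrunk.subset {n : ℕ} {C T : Set (Finset (Fin n))} (hT : IsTrunk C T) : T ⊆ C := by
  rcases hT with rfl | ⟨σ, rfl⟩
  · exact Set.empty_subset C
  · exact Set.sep_subset C _

theorem IsTrunk.tk {n : ℕ} (C : Set (Finset (Fin n))) (σ : Finset (Fin n)) :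
    IsTrunk C (Tk C σ) :=
  Or.inr ⟨σ, rfl⟩

section Morphism

variable {n m : ℕ} {C : Set (Finset (Fin n))} {D : Set (Finset (Fin m))}
  {f : Finset (Fin n) → Finset (Fin m)}

theorem IsMorphismOn.mapsTo_trunks (hf : IsMorphismOn C D f) :
    Set.MapsTo (fun T => C ∩ f ⁻¹' T) {T | IsTrunk D T} {T | IsTrunk C T} :=
  hf.2

theorem injOn_inter_preimage_trunks (hsurj : D ⊆ f '' C) :
    Set.InjOn (fun T => C ∩ f ⁻¹' T) {T | IsTrunk D T} :=
  (Set.injOn_inter_preimage C f).mono fun _ hT => hT.subset.trans hsurj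

theorem subset_of_map_eq_of_surjOn_trunks
    (hS : Set.SurjOn (fun T => C ∩ f ⁻¹' T) {T | IsTrunk D T} {T | IsTrunk C T})
    {c c' : Finset (Fin n)} (hc : c ∈ C) (hc' : c' ∈ C) (hcc' : f c = f c') : c ⊆ c' := by
  obtain ⟨T, -, hT⟩ := hS (IsTrunk.tk C c)
  change C ∩ f ⁻¹' T = Tk C c at hT
  have hfc : f c ∈ T := (hT.symm ▸ mem_tk_self hc : c ∈ C ∩ f ⁻¹' T).2
  have hc'T : c' ∈ C ∩ f ⁻¹' T := ⟨hc', show f c' ∈ T from hcc' ▸ hfc⟩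
  exact (hT ▸ hc'T : c' ∈ Tk C c).2

theorem injOn_of_surjOn_trunks
    (hS : Set.SurjOn (fun T => C ∩ f ⁻¹' T) {T | IsTrunk D T} {T | IsTrunk C T}) :
    Set.InjOn f C := fun _ hc _ hc' h =>
  (subset_of_map_eq_of_surjOn_trunks hS hc hc' h).antisymm
    (subset_of_map_eq_of_surjOn_trunks hS hc' hc h.symm)

end Morphism

/-- Proposition 3.12: a surjective morphism `f : C → D` between codes with equally many
trunks is a bijection, and taking preimages is a bijection from the trunks of `D` to the
trunks of `C`. -/
theorem surjective_equal_trunks_isom {n m : ℕ} (C : Set (Finset (Fin n)))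
    (D : Set (Finset (Fin m))) (f : Finset (Fin n) → Finset (Fin m))
    (hf : IsMorphismOn C D f) (hsurj : D ⊆ f '' C)
    (hcard : {T | IsTrunk C T}.ncard = {T | IsTrunk D T}.ncard) :
    Set.BijOn f C D ∧
      Set.BijOn (fun T => C ∩ f ⁻¹' T) {T | IsTrunk D T} {T | IsTrunk C T} := by
  have hinj := injOn_inter_preimage_trunks hsurj
  have hS : Set.SurjOn (fun T => C ∩ f ⁻¹' T) {T | IsTrunk D T} {T | IsTrunk C T} :=
    hf.mapsTo_trunks.surjOn_of_injOn_of_ncard_le hinj hcard.le (Set.toFinite _)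
  exact ⟨⟨hf.1, injOn_of_surjOn_trunks hS, hsurj⟩, hf.mapsTo_trunks, hinj, hS⟩
end

section
/- Let C ⊆ 2^[n] be a code, {T_j} a collection of trunks in C, and T a trunk generated by {T_j} (i.e., an intersection of some of the T_j). Let f be the morphism determined by {T_j} and g the morphism determined by {T_j} ∪ {T}. Then the images f(C) and g(C) are isomorphic codes. -/
open Classical in
/-- The morphism determined by a collection of trunks `T j`. -/
noncomputable def detMor {n m : ℕ} (T : Fin m → Set (Finset (Fin n)))
    (c : Finset (Fin n)) : Finset (Fin m) :=
  Finset.univ.filter fun j => c ∈ T j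

section
variable {n m k : ℕ}

theorem mem_detMor (T : Fin m → Set (Finset (Fin n))) (c : Finset (Fin n)) (j : Fin m) :
    j ∈ detMor T c ↔ c ∈ T j := by
  simp [detMor]

theorem mem_detMor_Tk_univ (τ : Fin k → Finset (Fin m)) (d : Finset (Fin m)) (j : Fin k) :
    j ∈ detMor (fun j => Tk Set.univ (τ j)) d ↔ τ j ⊆ d := by
  simp [mem_detMor, Tk]

theorem detMor_Tk_univ_detMor (T : Fin m → Set (Finset (Fin n))) (τ : Fin k → Finset (Fin m))
    (c : Finset (Fin n)) :
    detMor (fun j => Tk Set.univ (τ j)) (detMor T c) = detMor (fun j => ⋂ i ∈ τ j, T i) c := by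
  ext j
  rw [mem_detMor_Tk_univ, mem_detMor, Set.mem_iInter₂]
  simp only [Finset.subset_iff, mem_detMor]

theorem isMorphismOn_detMor_Tk_univ {C : Set (Finset (Fin m))} {D : Set (Finset (Fin k))}
    (τ : Fin k → Finset (Fin m)) (hmaps : ∀ c ∈ C, detMor (fun j => Tk Set.univ (τ j)) c ∈ D) :
    IsMorphismOn C D (detMor fun j => Tk Set.univ (τ j)) := by
  refine ⟨hmaps, ?_⟩
  rintro _ (rfl | ⟨ρ, rfl⟩)
  · exact .inl (by simp)
  · refine .inr ⟨ρ.biUnion τ, ?_⟩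
    ext c
    change c ∈ C ∧ (_ ∈ D ∧ ρ ⊆ _) ↔ c ∈ C ∧ ρ.biUnion τ ⊆ c
    rw [Finset.biUnion_subset]
    refine and_congr_right fun hc => ?_
    rw [and_iff_right (hmaps c hc), Finset.subset_iff]
    simp only [mem_detMor_Tk_univ]

theorem isMorphismOn_image_detMor {C : Set (Finset (Fin n))} {T : Fin m → Set (Finset (Fin n))}
    {T' : Fin k → Set (Finset (Fin n))} (τ : Fin k → Finset (Fin m))
    (hT' : ∀ j, T' j = ⋂ i ∈ τ j, T i) :
    IsMorphismOn (detMor T '' C) (detMor T' '' C) (detMor fun j => Tk Set.univ (τ j)) ∧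
      ∀ c, detMor (fun j => Tk Set.univ (τ j)) (detMor T c) = detMor T' c := by
  have hcomp : ∀ c, detMor (fun j => Tk Set.univ (τ j)) (detMor T c) = detMor T' c := fun c => by
    rw [detMor_Tk_univ_detMor, ← funext hT']
  refine ⟨isMorphismOn_detMor_Tk_univ τ ?_, hcomp⟩
  rintro _ ⟨c, hc, rfl⟩
  exact ⟨c, hc, (hcomp c).symm⟩

theorem exists_iso_image_detMor_of_generated (C : Set (Finset (Fin n)))
    (T : Fin m → Set (Finset (Fin n))) (T' : Fin k → Set (Finset (Fin n)))
    (τ : Fin k → Finset (Fin m)) (hT' : ∀ j, T' j = ⋂ i ∈ τ j, T i)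
    (ρ : Fin m → Finset (Fin k)) (hT : ∀ i, T i = ⋂ j ∈ ρ i, T' j) :
    ∃ (h : Finset (Fin m) → Finset (Fin k)) (h' : Finset (Fin k) → Finset (Fin m)),
      IsMorphismOn (detMor T '' C) (detMor T' '' C) h ∧
      IsMorphismOn (detMor T' '' C) (detMor T '' C) h' ∧
      (∀ d ∈ detMor T '' C, h' (h d) = d) ∧
      (∀ d ∈ detMor T' '' C, h (h' d) = d) := by
  obtain ⟨hmor, hcomp⟩ := isMorphismOn_image_detMor (C := C) τ hT'
  obtain ⟨hmor', hcomp'⟩ := isMorphismOn_image_detMor (C := C) ρ hT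
  refine ⟨_, _, hmor, hmor', ?_, ?_⟩
  · rintro _ ⟨c, -, rfl⟩
    rw [hcomp, hcomp']
  · rintro _ ⟨c, -, rfl⟩
    rw [hcomp', hcomp]

end

theorem adding_generated_trunk_isomorphic_general {n m : ℕ} (C : Set (Finset (Fin n)))
    (T : Fin m → Set (Finset (Fin n)))
    (T₀ : Set (Finset (Fin n)))
    (hgen : ∃ σ : Set (Fin m), σ.Nonempty ∧ T₀ = ⋂ j ∈ σ, T j) :
    ∃ (h : Finset (Fin m) → Finset (Fin (m + 1)))
      (h' : Finset (Fin (m + 1)) → Finset (Fin m)),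
      IsMorphismOn (detMor T '' C) (detMor (Fin.snoc T T₀) '' C) h ∧
      IsMorphismOn (detMor (Fin.snoc T T₀) '' C) (detMor T '' C) h' ∧
      (∀ d ∈ detMor T '' C, h' (h d) = d) ∧
      (∀ d ∈ detMor (Fin.snoc T T₀) '' C, h (h' d) = d) := by
  obtain ⟨σ, -, rfl⟩ := hgen
  refine exists_iso_image_detMor_of_generated C T _
    (Fin.lastCases σ.toFinite.toFinset fun i => {i}) ?_ (fun i => {i.castSucc}) ?_
  · intro j
    induction j using Fin.lastCases with
    | last => simp
    | cast i => simp
  · intro i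
    simp

/-- Corollary 3.9: let `{T j}` be a collection of trunks in `C` and `T₀` a trunk generated by
`{T j}` (an intersection of some of the `T j`).  If `f` is the morphism determined by `{T j}`
and `g` is the morphism determined by `{T j} ∪ {T₀}`, then the image codes `f(C)` and `g(C)`
are isomorphic. -/
theorem adding_generated_trunk_isomorphic {n m : ℕ} (C : Set (Finset (Fin n)))
    (T : Fin m → Set (Finset (Fin n))) (hT : ∀ j, IsTrunk C (T j))
    (T₀ : Set (Finset (Fin n))) (hT₀ : IsTrunk C T₀)
    (hgen : ∃ σ : Set (Fin m), σ.Nonempty ∧ T₀ = ⋂ j ∈ σ, T j) :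
    ∃ (h : Finset (Fin m) → Finset (Fin (m + 1)))
      (h' : Finset (Fin (m + 1)) → Finset (Fin m)),
      IsMorphismOn (detMor T '' C) (detMor (Fin.snoc T T₀) '' C) h ∧
      IsMorphismOn (detMor (Fin.snoc T T₀) '' C) (detMor T '' C) h' ∧
      (∀ d ∈ detMor T '' C, h' (h d) = d) ∧
      (∀ d ∈ detMor (Fin.snoc T T₀) '' C, h (h' d) = d) :=
  adding_generated_trunk_isomorphic_general C T T₀ hgen
end

section
/- For n ≥ 2, the set of elements of the intersection-completion of the maximal codewords of the code C_n that are not in C_n consists of exactly one element, namely the singleton {n+1}. -/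
/-!
The maximal codewords of `C_n` are `M_i = ([n] \ {i}) ∪ {n+1, n+1+i}` for `1 ≤ i ≤ n+1` (type (v)
is `M_{n+1}`) and `T = {n+2, …, 2n+2}`. A single maximal codeword is its own intersection, so
consider two distinct ones `c₀, c₁` in the family. If `T` belongs to the family, the intersection
lies in `M_j ∩ T = {n+1+j}` for some `j`, hence is a codeword. Otherwise all members are `M_i`'s,
so the intersection contains `n+1`, lies in `c₀ ∩ c₁ ⊆ [n+1]` and misses the index `k ≤ n` of one
of `c₀, c₁`: it is `σ ∪ {n+1}` with `σ ⊊ [n]`, a codeword unless `σ = ∅`. Conversely,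
for `n ≥ 1`, `⋂ᵢ M_i = {n+1}`, which is not a codeword.
-/

/-- The code `C_n ⊆ 2^{[2n+2]}`, with ground set `{1, …, 2n+2} ⊆ ℕ`. -/
def Cn (n : ℕ) : Set (Finset ℕ) :=
  {∅}
  ∪ {s | ∃ σ : Finset ℕ, σ.Nonempty ∧ σ ⊂ Finset.Icc 1 n ∧ s = σ ∪ {n + 1}}
  ∪ {s | ∃ i, 1 ≤ i ∧ i ≤ n + 1 ∧ s = {n + 1 + i}}
  ∪ {s | ∃ i, 1 ≤ i ∧ i ≤ n ∧ s = (Finset.Icc 1 n \ {i}) ∪ {n + 1} ∪ {n + 1 + i}}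
  ∪ {Finset.Icc 1 n ∪ {n + 1} ∪ {2 * n + 2}}
  ∪ {Finset.Icc (n + 2) (2 * n + 2)}

/-- The maximal codewords of a code. -/
def maxCodewords (C : Set (Finset ℕ)) : Set (Finset ℕ) :=
  {c ∈ C | ∀ c' ∈ C, c ⊆ c' → c' = c}

def intersectionCompletion {α : Type*} [DecidableEq α] (F : Set (Finset α)) : Set (Finset α) :=
  {σ | ∃ (S : Finset (Finset α)) (hS : S.Nonempty), ↑S ⊆ F ∧ σ = S.inf' hS id}

theorem eq_of_mem_maxCodewords_of_subset {C : Set (Finset ℕ)} {c c' : Finset ℕ}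
    (hc : c ∈ maxCodewords C) (hc' : c' ∈ C) (h : c ⊆ c') : c = c' :=
  (hc.2 c' hc' h).symm

namespace Cn

/-- `facet n (n + 1)` is the codeword `[n] ∪ {n+1} ∪ {2n+2}` of type (v). -/
def facet (n i : ℕ) : Finset ℕ := (Finset.Icc 1 n \ {i}) ∪ {n + 1} ∪ {n + 1 + i}

def tailFacet (n : ℕ) : Finset ℕ := Finset.Icc (n + 2) (2 * n + 2)

variable {n i j k x : ℕ} {s : Finset ℕ}

theorem mem_facet : x ∈ facet n i ↔ (1 ≤ x ∧ x ≤ n ∧ x ≠ i) ∨ x = n + 1 ∨ x = n + 1 + i := by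
  simp only [facet, Finset.mem_union, Finset.mem_sdiff, Finset.mem_Icc, Finset.mem_singleton]
  omega

theorem mem_tailFacet : x ∈ tailFacet n ↔ n + 2 ≤ x ∧ x ≤ 2 * n + 2 := Finset.mem_Icc

theorem facet_succ : facet n (n + 1) = Finset.Icc 1 n ∪ {n + 1} ∪ {2 * n + 2} := by
  ext x
  simp only [mem_facet, Finset.mem_union, Finset.mem_Icc, Finset.mem_singleton]
  omega

theorem exists_facet_iff :
    (∃ j, 1 ≤ j ∧ j ≤ n + 1 ∧ s = facet n j) ↔
      (∃ j, 1 ≤ j ∧ j ≤ n ∧ s = facet n j) ∨ s = facet n (n + 1) := by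
  constructor
  · rintro ⟨j, hj1, hj2, rfl⟩
    rcases Nat.lt_or_eq_of_le hj2 with hj | rfl
    exacts [Or.inl ⟨j, hj1, by omega, rfl⟩, Or.inr rfl]
  · rintro (⟨j, hj1, hj2, rfl⟩ | rfl)
    exacts [⟨j, hj1, by omega, rfl⟩, ⟨n + 1, by omega, le_rfl, rfl⟩]

theorem mem_Cn_iff : s ∈ Cn n ↔
    s = ∅ ∨ (∃ σ : Finset ℕ, σ.Nonempty ∧ σ ⊂ Finset.Icc 1 n ∧ s = σ ∪ {n + 1}) ∨
      (∃ j, 1 ≤ j ∧ j ≤ n + 1 ∧ s = {n + 1 + j}) ∨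
      (∃ j, 1 ≤ j ∧ j ≤ n + 1 ∧ s = facet n j) ∨ s = tailFacet n := by
  rw [exists_facet_iff, facet_succ]
  simp only [Cn, facet, tailFacet, Set.mem_union, Set.mem_ofPred_eq, Set.mem_singleton_iff, or_assoc]

theorem facet_mem_maxCodewords (hi1 : 1 ≤ i) (hi2 : i ≤ n + 1) :
    facet n i ∈ maxCodewords (Cn n) := by
  refine ⟨mem_Cn_iff.2 (Or.inr (Or.inr (Or.inr (Or.inl ⟨i, hi1, hi2, rfl⟩)))), fun c hc hsub => ?_⟩
  have hn1 : n + 1 ∈ c := hsub (mem_facet.2 (by omega))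
  have hni : n + 1 + i ∈ c := hsub (mem_facet.2 (by omega))
  rcases mem_Cn_iff.1 hc with rfl | ⟨σ, -, hσ, rfl⟩ | ⟨j, hj, -, rfl⟩ | ⟨j, -, -, rfl⟩ | rfl
  · simp at hn1
  · rw [Finset.mem_union, Finset.mem_singleton] at hni
    have := Finset.mem_Icc.1 (hσ.subset (hni.resolve_right (by omega)))
    omega
  · rw [Finset.mem_singleton] at hn1
    omega
  · rw [mem_facet] at hni
    obtain rfl : i = j := by omega
    rfl
  · rw [mem_tailFacet] at hn1
    omega

theorem eq_facet_or_eq_tailFacet_of_mem_maxCodewords {c : Finset ℕ}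
    (hc : c ∈ maxCodewords (Cn n)) : (∃ i, 1 ≤ i ∧ i ≤ n + 1 ∧ c = facet n i) ∨ c = tailFacet n := by
  have htail_mem : tailFacet n ∈ Cn n := mem_Cn_iff.2 (by tauto)
  rcases mem_Cn_iff.1 hc.1 with rfl | ⟨σ, -, hσ, rfl⟩ | ⟨j, hj1, hj2, rfl⟩ | h | h
  · exact Or.inr (eq_of_mem_maxCodewords_of_subset hc htail_mem (Finset.empty_subset _))
  · obtain ⟨i, hi, hiσ⟩ := Finset.exists_of_ssubset hσ
    rw [Finset.mem_Icc] at hi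
    refine Or.inl ⟨i, hi.1, by omega, eq_of_mem_maxCodewords_of_subset hc
      (facet_mem_maxCodewords hi.1 (by omega)).1 fun x hx => mem_facet.2 ?_⟩
    rcases Finset.mem_union.1 hx with hx | hx
    · have := Finset.mem_Icc.1 (hσ.subset hx)
      have : x ≠ i := by rintro rfl; exact hiσ hx
      omega
    · exact Or.inr (Or.inl (Finset.mem_singleton.1 hx))
  · refine Or.inr (eq_of_mem_maxCodewords_of_subset hc htail_mem ?_)
    exact Finset.singleton_subset_iff.2 (mem_tailFacet.2 (by omega))
  · exact Or.inl h
  · exact Or.inr h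

theorem mem_Cn_of_subset_singleton (hj1 : 1 ≤ j) (hj2 : j ≤ n + 1) (h : s ⊆ {n + 1 + j}) :
    s ∈ Cn n := by
  rcases Finset.subset_singleton_iff.1 h with rfl | rfl
  exacts [mem_Cn_iff.2 (Or.inl rfl), mem_Cn_iff.2 (Or.inr (Or.inr (Or.inl ⟨j, hj1, hj2, rfl⟩)))]

theorem mem_Cn_or_eq_singleton_of_subset_Icc (hn1 : n + 1 ∈ s) (hs : s ⊆ Finset.Icc 1 (n + 1))
    (hk1 : 1 ≤ k) (hkn : k ≤ n) (hk : k ∉ s) : s ∈ Cn n ∨ s = {n + 1} := by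
  rcases (s.erase (n + 1)).eq_empty_or_nonempty with h | h
  · exact Or.inr (((Finset.erase_eq_empty_iff _ _).1 h).resolve_left (Finset.ne_empty_of_mem hn1))
  refine Or.inl (mem_Cn_iff.2 (Or.inr (Or.inl ⟨s.erase (n + 1), h, ?_, ?_⟩)))
  · refine (Finset.ssubset_iff_of_subset fun x hx => ?_).2
      ⟨k, Finset.mem_Icc.2 ⟨hk1, hkn⟩, fun hks => hk (Finset.mem_of_mem_erase hks)⟩
    have := Finset.mem_Icc.1 (hs (Finset.mem_of_mem_erase hx))
    have := Finset.ne_of_mem_erase hx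
    exact Finset.mem_Icc.2 (by omega)
  · rw [Finset.union_singleton, Finset.insert_erase hn1]

theorem singleton_not_mem_Cn : ({n + 1} : Finset ℕ) ∉ Cn n := by
  intro h
  rcases mem_Cn_iff.1 h with h | ⟨σ, ⟨a, ha⟩, hσ, h⟩ | ⟨j, hj, -, h⟩ | ⟨j, hj, -, h⟩ | h
  · exact Finset.singleton_ne_empty _ h
  · have := Finset.mem_Icc.1 (hσ.subset ha)
    have : a ∈ ({n + 1} : Finset ℕ) := h ▸ Finset.mem_union_left _ ha
    rw [Finset.mem_singleton] at this
    omega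
  · rw [Finset.singleton_inj] at h
    omega
  · have : n + 1 + j ∈ ({n + 1} : Finset ℕ) := h ▸ mem_facet.2 (by omega)
    rw [Finset.mem_singleton] at this
    omega
  · have : 2 * n + 2 ∈ ({n + 1} : Finset ℕ) := h ▸ mem_tailFacet.2 (by omega)
    rw [Finset.mem_singleton] at this
    omega

theorem mem_Cn_or_eq_singleton_of_mem_intersectionCompletion {σ : Finset ℕ}
    (hσ : σ ∈ intersectionCompletion (maxCodewords (Cn n))) : σ ∈ Cn n ∨ σ = {n + 1} := by
  obtain ⟨S, hS, hSmax, rfl⟩ := hσ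
  have hclass (c) (hc : c ∈ S) := eq_facet_or_eq_tailFacet_of_mem_maxCodewords (hSmax hc)
  obtain ⟨c₀, hc₀⟩ := id hS
  by_cases hall : ∀ c ∈ S, c = c₀
  · obtain rfl := Finset.eq_singleton_iff_unique_mem.2 ⟨hc₀, hall⟩
    exact Or.inl (by simpa using (hSmax (Finset.mem_singleton_self c₀)).1)
  push Not at hall
  obtain ⟨c₁, hc₁, hne⟩ := hall
  by_cases htail : tailFacet n ∈ S
  · obtain ⟨c, hc, hct⟩ : ∃ c ∈ S, c ≠ tailFacet n := by
      by_cases h₀ : c₀ = tailFacet n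
      exacts [⟨c₁, hc₁, h₀ ▸ hne⟩, ⟨c₀, hc₀, h₀⟩]
    obtain ⟨j, hj1, hj2, rfl⟩ := (hclass c hc).resolve_right hct
    refine Or.inl (mem_Cn_of_subset_singleton hj1 hj2 fun x hx => ?_)
    have := mem_facet.1 ((Finset.mem_inf' hS).1 hx _ hc)
    have := mem_tailFacet.1 ((Finset.mem_inf' hS).1 hx _ htail)
    exact Finset.mem_singleton.2 (by omega)
  have hfacet (c) (hc : c ∈ S) : ∃ i, 1 ≤ i ∧ i ≤ n + 1 ∧ c = facet n i :=
    (hclass c hc).resolve_right (by rintro rfl; exact htail hc)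
  obtain ⟨i, hi1, hi2, rfl⟩ := hfacet c₀ hc₀
  obtain ⟨j, hj1, hj2, rfl⟩ := hfacet c₁ hc₁
  have hij : i ≠ j := by rintro rfl; exact hne rfl
  obtain ⟨k, hk1, hkn, hk⟩ : ∃ k, 1 ≤ k ∧ k ≤ n ∧ facet n k ∈ S := by
    by_cases hi : i ≤ n
    exacts [⟨i, hi1, hi, hc₀⟩, ⟨j, hj1, by omega, hc₁⟩]
  refine mem_Cn_or_eq_singleton_of_subset_Icc ?_ (fun x hx => ?_) hk1 hkn fun hx => ?_
  · refine (Finset.mem_inf' hS).2 fun c hc => ?_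
    obtain ⟨l, -, -, rfl⟩ := hfacet c hc
    exact mem_facet.2 (Or.inr (Or.inl rfl))
  · have := mem_facet.1 ((Finset.mem_inf' hS).1 hx _ hc₀)
    have := mem_facet.1 ((Finset.mem_inf' hS).1 hx _ hc₁)
    exact Finset.mem_Icc.2 (by omega)
  · have := mem_facet.1 ((Finset.mem_inf' hS).1 hx _ hk)
    omega

theorem singleton_mem_intersectionCompletion (hn : 1 ≤ n) :
    {n + 1} ∈ intersectionCompletion (maxCodewords (Cn n)) := by
  have hne : ((Finset.Icc 1 (n + 1)).image (facet n)).Nonempty := by simp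
  refine ⟨_, hne, ?_, ?_⟩
  · simp only [Finset.coe_image, Set.image_subset_iff]
    exact fun i hi => facet_mem_maxCodewords (Finset.mem_Icc.1 hi).1 (Finset.mem_Icc.1 hi).2
  · ext x
    simp only [Finset.mem_singleton, Finset.mem_inf', Finset.forall_mem_image, Finset.mem_Icc, id,
      mem_facet]
    constructor
    · rintro rfl i -
      exact Or.inr (Or.inl rfl)
    · intro h
      have h₁ := @h 1 ⟨le_rfl, by omega⟩
      have h₂ := @h (n + 1) ⟨by omega, le_rfl⟩
      by_cases hx : 1 ≤ x ∧ x ≤ n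
      · have := @h x ⟨hx.1, by omega⟩
        omega
      · omega

end Cn

open Cn in
/-- For `n ≥ 2`, the only intersection of maximal codewords of `C_n` that is not itself a
codeword of `C_n` is the singleton `{n+1}`. -/
theorem Cn_missing_max_intersection (n : ℕ) (hn : 2 ≤ n) :
    {σ : Finset ℕ |
        (∃ (S : Finset (Finset ℕ)) (hS : S.Nonempty), ↑S ⊆ maxCodewords (Cn n) ∧ σ = S.inf' hS id) ∧
        σ ∉ Cn n} = {({n + 1} : Finset ℕ)} := by
  ext σ
  change σ ∈ intersectionCompletion (maxCodewords (Cn n)) ∧ σ ∉ Cn n ↔ σ = {n + 1}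
  constructor
  · rintro ⟨hσ, hσC⟩
    exact (mem_Cn_or_eq_singleton_of_mem_intersectionCompletion hσ).resolve_left hσC
  · rintro rfl
    exact ⟨singleton_mem_intersectionCompletion (by omega), singleton_not_mem_Cn⟩
end

section
/- Suppose convex open sets U_1, ..., U_{2n+2} in R^d realize the code C_n. Then the sets U_{n+2}, ..., U_{2n+2} form a sunflower of n+1 convex open sets whose center is disjoint from U_{n+1}, and U_{n+1} = U_1 ∪ ... ∪ U_n. -/
/-- The code of a collection of sets `U 1, …, U N` in `ℝ^d`. -/
def codeOf {d : ℕ} (U : ℕ → Set (EuclideanSpace ℝ (Fin d))) (N : ℕ) : Set (Finset ℕ) :=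
  {σ | σ ⊆ Finset.Icc 1 N ∧
    ((⋂ i ∈ σ, U i) \ ⋃ j ∈ Finset.Icc 1 N \ σ, U j).Nonempty}

section Code

variable {d N : ℕ} {U : ℕ → Set (EuclideanSpace ℝ (Fin d))}

theorem exists_mem_codeOf_iff (x : EuclideanSpace ℝ (Fin d)) :
    ∃ τ ∈ codeOf U N, ∀ i ∈ Finset.Icc 1 N, i ∈ τ ↔ x ∈ U i := by
  classical
  refine ⟨(Finset.Icc 1 N).filter (x ∈ U ·), ⟨Finset.filter_subset _ _, x, ?_, ?_⟩, ?_⟩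
  · exact Set.mem_iInter₂.2 fun i hi => (Finset.mem_filter.1 hi).2
  · simp +contextual [Finset.mem_sdiff]
  · intro i hi
    simp [hi]

theorem biInter_subset_biUnion_of_codeOf {A B : Finset ℕ} (hA : A ⊆ Finset.Icc 1 N)
    (h : ∀ τ ∈ codeOf U N, A ⊆ τ → ∃ b ∈ B, b ∈ τ) :
    ⋂ i ∈ A, U i ⊆ ⋃ b ∈ B, U b := by
  intro x hx
  obtain ⟨τ, hτ, hτx⟩ := exists_mem_codeOf_iff (N := N) x
  obtain ⟨b, hb, hbτ⟩ := h τ hτ fun i hi => (hτx i (hA hi)).2 (Set.mem_iInter₂.1 hx i hi)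
  exact Set.mem_iUnion₂.2 ⟨b, hb, (hτx b (hτ.1 hbτ)).1 hbτ⟩

theorem biInter_subset_biInter_of_codeOf {A B : Finset ℕ} (hA : A ⊆ Finset.Icc 1 N)
    (h : ∀ τ ∈ codeOf U N, A ⊆ τ → B ⊆ τ) :
    ⋂ i ∈ A, U i ⊆ ⋂ k ∈ B, U k := by
  refine Set.subset_iInter₂ fun k hk => ?_
  simpa using biInter_subset_biUnion_of_codeOf (B := {k}) hA
    fun τ hτ hAτ => ⟨k, by simp, h τ hτ hAτ hk⟩

theorem biInter_eq_empty_of_codeOf {A : Finset ℕ} (hA : A ⊆ Finset.Icc 1 N)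
    (h : ∀ τ ∈ codeOf U N, ¬A ⊆ τ) :
    ⋂ i ∈ A, U i = ∅ := by
  simpa using biInter_subset_biUnion_of_codeOf (B := ∅) hA fun τ hτ hAτ => absurd hAτ (h τ hτ)

end Code

section Cn

variable {n : ℕ} {s : Finset ℕ}

theorem eq_Icc_of_mem_Cn (hs : s ∈ Cn n) {a b : ℕ} (ha : a ∈ s) (hb : b ∈ s) (hab : a ≠ b)
    (ha' : n + 2 ≤ a) (hb' : n + 2 ≤ b) : s = Finset.Icc (n + 2) (2 * n + 2) := by
  rcases hs with ((((rfl | ⟨σ, -, hσ, rfl⟩) | ⟨i, -, -, rfl⟩) | ⟨i, -, -, rfl⟩) | rfl) | rfl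
  · simp at ha
  · simp only [Finset.mem_union, Finset.mem_singleton] at ha
    rcases ha with ha | rfl
    · have := (Finset.mem_Icc.1 (hσ.1 ha)).2; omega
    · omega
  · simp at ha hb; omega
  · simp at ha hb; omega
  · simp at ha hb; omega
  · rfl

theorem add_one_mem_of_mem_Cn (hs : s ∈ Cn n) {a : ℕ} (ha : a ∈ s) (ha' : a ∈ Finset.Icc 1 n) :
    n + 1 ∈ s := by
  rw [Finset.mem_Icc] at ha'
  rcases hs with ((((rfl | ⟨σ, -, -, rfl⟩) | ⟨i, -, -, rfl⟩) | ⟨i, -, -, rfl⟩) | rfl) | rfl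
  all_goals simp at ha ⊢; try omega

theorem exists_mem_Icc_of_mem_Cn (hn : 2 ≤ n) (hs : s ∈ Cn n) (h : n + 1 ∈ s) :
    ∃ a ∈ Finset.Icc 1 n, a ∈ s := by
  rcases hs with ((((rfl | ⟨σ, ⟨a, ha⟩, hσ, rfl⟩) | ⟨i, hi, -, rfl⟩) | ⟨i, -, -, rfl⟩) | rfl) | rfl
  · simp at h
  · exact ⟨a, hσ.1 ha, by simp [ha]⟩
  · simp at h; omega
  · exact ⟨if i = 1 then 2 else 1, by split_ifs <;> simp <;> omega⟩
  · exact ⟨1, by simp; omega⟩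
  · simp at h

end Cn

theorem Cn_realization_structure_general (n : ℕ) (hn : 2 ≤ n) (d : ℕ)
    (U : ℕ → Set (EuclideanSpace ℝ (Fin d)))
    (hcode : codeOf U (2 * n + 2) = Cn n) :
    (⋂ k ∈ Finset.Icc (n + 2) (2 * n + 2), U k).Nonempty ∧
    (∀ i ∈ Finset.Icc (n + 2) (2 * n + 2), ∀ j ∈ Finset.Icc (n + 2) (2 * n + 2), i ≠ j →
      U i ∩ U j = ⋂ k ∈ Finset.Icc (n + 2) (2 * n + 2), U k) ∧
    (⋂ k ∈ Finset.Icc (n + 2) (2 * n + 2), U k) ∩ U (n + 1) = ∅ ∧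
    U (n + 1) = ⋃ i ∈ Finset.Icc 1 n, U i := by
  set petals := Finset.Icc (n + 2) (2 * n + 2)
  have hCn : ∀ τ ∈ codeOf U (2 * n + 2), τ ∈ Cn n := fun τ hτ => hcode ▸ hτ
  refine ⟨?_, fun i hi j hj hij => ?_, ?_, ?_⟩
  · obtain ⟨-, hne⟩ : petals ∈ codeOf U (2 * n + 2) := hcode ▸ Or.inr rfl
    exact hne.mono Set.sdiff_subset
  · rw [Finset.mem_Icc] at hi hj
    refine Set.Subset.antisymm ?_ (Set.subset_inter (Set.biInter_subset_of_mem ?_)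
      (Set.biInter_subset_of_mem ?_))
    · simpa using biInter_subset_biInter_of_codeOf (N := 2 * n + 2) (A := {i, j}) (B := petals)
        (fun a ha => by simp at ha ⊢; omega) fun τ hτ hijτ =>
          (eq_Icc_of_mem_Cn (hCn τ hτ) (hijτ (by simp)) (hijτ (by simp)) hij hi.1 hj.1).ge
    all_goals simp [petals]; omega
  · rw [Set.inter_comm, ← Finset.set_biInter_insert]
    refine biInter_eq_empty_of_codeOf (N := 2 * n + 2)
      (fun a ha => by simp [petals] at ha ⊢; omega) fun τ hτ hτ' => ?_
    have hpetals := eq_Icc_of_mem_Cn (b := 2 * n + 2) (hCn τ hτ) (hτ' (by simp [petals]; omega))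
      (hτ' (by simp [petals]; omega)) (by omega) le_rfl (by omega)
    simpa [hpetals] using hτ' (Finset.mem_insert_self _ _)
  · refine Set.Subset.antisymm ?_ (Set.iUnion₂_subset fun a ha => ?_)
    · simpa using biInter_subset_biUnion_of_codeOf (N := 2 * n + 2) (A := {n + 1})
        (B := Finset.Icc 1 n) (by simp; omega) fun τ hτ hτ' => exists_mem_Icc_of_mem_Cn hn (hCn τ hτ) (by simpa using hτ')
    · simpa using biInter_subset_biInter_of_codeOf (N := 2 * n + 2) (A := {a}) (B := {n + 1})
        (by simp at ha ⊢; omega) fun τ hτ hτ' =>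
          by simpa using add_one_mem_of_mem_Cn (hCn τ hτ) (by simpa using hτ') ha

/-- In any convex open realization of `C_n` (with `n ≥ 2`), the sets
`U (n+2), …, U (2n+2)` form a sunflower of `n+1` convex open sets whose (nonempty) center
is disjoint from `U (n+1)`, and `U (n+1) = U 1 ∪ ⋯ ∪ U n`. -/
theorem Cn_realization_structure (n : ℕ) (hn : 2 ≤ n) (d : ℕ)
    (U : ℕ → Set (EuclideanSpace ℝ (Fin d)))
    (hconv : ∀ i ∈ Finset.Icc 1 (2 * n + 2), Convex ℝ (U i))
    (hopen : ∀ i ∈ Finset.Icc 1 (2 * n + 2), IsOpen (U i))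
    (hcode : codeOf U (2 * n + 2) = Cn n) :
    (⋂ k ∈ Finset.Icc (n + 2) (2 * n + 2), U k).Nonempty ∧
    (∀ i ∈ Finset.Icc (n + 2) (2 * n + 2), ∀ j ∈ Finset.Icc (n + 2) (2 * n + 2), i ≠ j →
      U i ∩ U j = ⋂ k ∈ Finset.Icc (n + 2) (2 * n + 2), U k) ∧
    (⋂ k ∈ Finset.Icc (n + 2) (2 * n + 2), U k) ∩ U (n + 1) = ∅ ∧
    U (n + 1) = ⋃ i ∈ Finset.Icc 1 n, U i :=
  Cn_realization_structure_general n hn d U hcode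
end

section
/- For n ≥ 2, consider the following convex open sets in R^n: for n+2 ≤ j ≤ 2n+1, let U_j = {x ∈ R^n : 0 < x_k < 1 for all k ≠ j-n-1}; let U_{n+1} = {x ∈ R^n : x_k > 0 for all k, and 2n-1 < x_1+...+x_n < 2n}; and for j ∈ [n], let U_j = U_{n+1} ∩ {x : Σ_{k∈[n]\{j}} x_k > n-1}. Then: (1) the sets U_1,...,U_n cover U_{n+1}; (2) the point with all coordinates equal to 2 - 1/(2n) lies in U_1 ∩ ... ∩ U_{n+1}; and (3) for each j ∈ [n], every point of U_{n+1} ∩ U_{n+1+j} lies in U_k for all k ∈ [n]\{j} but not in U_j. -/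
/-!
A smallest coordinate of a point of `W` is at most `Σ x / n`, so the other coordinates sum to
more than `(n - 1)(2n - 1)/n ≥ n - 1`. On the petal `V j` the coordinates other than `x j` are
below `1`, so they sum to less than `n - 1`, while dropping one of them from `Σ x > 2n - 1`
leaves more than `2n - 2 ≥ n - 1`.
-/

open Finset

section SumErase

variable {ι : Type*} [Fintype ι] [DecidableEq ι]

theorem exists_card_sub_one_mul_sum_le_card_mul_sum_erase [Nonempty ι] (x : ι → ℝ) :
    ∃ j, ((Fintype.card ι : ℝ) - 1) * ∑ k, x k ≤ Fintype.card ι * ∑ k ∈ univ.erase j, x k := by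
  obtain ⟨j, -, hj⟩ := exists_min_image univ x univ_nonempty
  refine ⟨j, ?_⟩
  have hmin : (Fintype.card ι : ℝ) * x j ≤ ∑ k, x k := by
    simpa using card_nsmul_le_sum univ x (x j) fun k _ => hj k (mem_univ k)
  rw [sum_erase_eq_sub (mem_univ j)]
  linarith

theorem sum_erase_lt_card_sub_one {x : ι → ℝ} {j : ι} (hι : 2 ≤ Fintype.card ι)
    (hx : ∀ k, k ≠ j → x k < 1) :
    ∑ k ∈ univ.erase j, x k < (Fintype.card ι : ℝ) - 1 := by
  have hcard : #(univ.erase j) = Fintype.card ι - 1 := by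
    rw [card_erase_of_mem (mem_univ j), card_univ]
  have hne : (univ.erase j).Nonempty := by
    rw [← card_pos, hcard]; omega
  calc ∑ k ∈ univ.erase j, x k < ∑ _k ∈ univ.erase j, (1 : ℝ) :=
        sum_lt_sum_of_nonempty hne fun k hk => hx k (ne_of_mem_erase hk)
    _ = (Fintype.card ι : ℝ) - 1 := by
        rw [sum_const, hcard, nsmul_one, Nat.cast_sub (by omega), Nat.cast_one]

end SumErase

theorem sum_const_two_sub_one_div (n : ℕ) (hn : n ≠ 0) :
    ∑ _k : Fin n, (2 - 1 / (2 * (n : ℝ))) = 2 * n - 1 / 2 := by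
  have hn_inv : (n : ℝ) * (1 / (2 * n)) = 1 / 2 := by field_simp
  rw [sum_const, card_univ, Fintype.card_fin, nsmul_eq_mul, mul_sub, hn_inv]
  ring

/-- The geometric facts from the proof of Lemma 4.7.  In `ℝ^n` (`n ≥ 2`), with
`V j = {x | 0 < x k < 1 for all k ≠ j}` (the petals `U (n+1+j)`),
`W = {x | all x k > 0 and 2n - 1 < Σ x k < 2n}` (the set `U (n+1)`), and
`A j = W ∩ {x | Σ_{k ≠ j} x k > n - 1}` (the sets `U j`, `j ∈ [n]`), we have:
(1) the `A j` cover `W`; (2) the point with all coordinates `2 - 1/(2n)` lies in every `A j`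
(and in `W`); (3) every point of `W ∩ V j` lies in `A k` for all `k ≠ j` but not in `A j`. -/
theorem Cn_realization_geometry (n : ℕ) (hn : 2 ≤ n)
    (V : Fin n → Set (EuclideanSpace ℝ (Fin n)))
    (hV : ∀ j, V j = {x | ∀ k, k ≠ j → 0 < x k ∧ x k < 1})
    (W : Set (EuclideanSpace ℝ (Fin n)))
    (hW : W = {x | (∀ k, 0 < x k) ∧ 2 * (n : ℝ) - 1 < ∑ k, x k ∧ ∑ k, x k < 2 * (n : ℝ)})
    (A : Fin n → Set (EuclideanSpace ℝ (Fin n)))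
    (hA : ∀ j, A j = W ∩ {x | (n : ℝ) - 1 < ∑ k ∈ Finset.univ.erase j, x k}) :
    (W ⊆ ⋃ j, A j) ∧
    ((WithLp.toLp 2 (fun _ => 2 - 1 / (2 * (n : ℝ))) : EuclideanSpace ℝ (Fin n)) ∈ W ∩ ⋂ j, A j) ∧
    (∀ j, ∀ x ∈ W ∩ V j, (∀ k, k ≠ j → x ∈ A k) ∧ x ∉ A j) := by
  have hn' : (2 : ℝ) ≤ n := by exact_mod_cast hn
  have hA' : ∀ j x, x ∈ A j ↔ x ∈ W ∧ (n : ℝ) - 1 < ∑ k, x k - x j := fun j x => by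
    rw [hA, Set.mem_inter_iff, Set.mem_ofPred_eq, sum_erase_eq_sub (mem_univ j)]
  refine ⟨fun x hx => ?_, ?_, fun j x ⟨hxW, hxV⟩ => ?_⟩
  · have : Nonempty (Fin n) := ⟨⟨0, by omega⟩⟩
    obtain ⟨j, hj⟩ := exists_card_sub_one_mul_sum_le_card_mul_sum_erase x.ofLp
    rw [Fintype.card_fin, sum_erase_eq_sub (mem_univ j)] at hj
    have hsum := (hW ▸ hx).2.1
    exact Set.mem_iUnion.2 ⟨j, (hA' j x).2 ⟨hx, by nlinarith⟩⟩
  · have hinv : 0 < 1 / (2 * (n : ℝ)) := by positivity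
    have hinv_lt : 1 / (2 * (n : ℝ)) < 1 := (div_lt_one (by positivity)).2 (by linarith)
    have hsum := sum_const_two_sub_one_div n (by omega)
    have hcW : (WithLp.toLp 2 fun _ => 2 - 1 / (2 * (n : ℝ)) : EuclideanSpace ℝ (Fin n)) ∈ W := by
      rw [hW]
      exact ⟨fun _ => by linarith, by rw [hsum]; linarith, by rw [hsum]; linarith⟩
    refine ⟨hcW, Set.mem_iInter.2 fun j => (hA' j _).2 ⟨hcW, ?_⟩⟩
    rw [hsum]
    linarith
  · rw [hV] at hxV
    have hsmall := sum_erase_lt_card_sub_one (by simpa using hn) fun k hk => (hxV k hk).2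
    rw [Fintype.card_fin, sum_erase_eq_sub (mem_univ j)] at hsmall
    have hsum := (hW ▸ hxW).2.1
    refine ⟨fun k hk => (hA' k x).2 ⟨hxW, ?_⟩, fun hxA => ?_⟩
    · linarith [(hxV k hk).2]
    · linarith [((hA' j x).1 hxA).2]
end
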